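/- arXiv:1203.5433 — 7 statements merged into one kernel-verified Lean document; each statement's English description precedes it below -/
import Mathlib

section
/- For every n ≥ 1 and every permutation π ∈ S_n, the number of permutations ρ ∈ S_{n+1} that cover π is exactly n² + 1 (in particular, this number is the same for all π ∈ S_n). -/
/-- `ρ ∈ S_{n+1}` covers `π ∈ S_n` if `π` occurs as an order-isomorphic subsequence of `ρ`:
there is a strictly increasing `f : Fin n → Fin (n+1)` such that `π i < π j ↔ ρ (f i) < ρ (f j)`. -/
def Covers {n : ℕ} (ρ : Equiv.Perm (Fin (n+1))) (π : Equiv.Perm (Fin n)) : Prop :=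
  ∃ f : Fin n → Fin (n+1), StrictMono f ∧ ∀ i j : Fin n, π i < π j ↔ ρ (f i) < ρ (f j)

namespace CoveringCountAux

open Fin Equiv Set

variable {n : ℕ}

/-- Insertion of value `v` at position `p` into the pattern `π`. -/
def ins (π : Equiv.Perm (Fin n)) (p v : Fin (n+1)) : Equiv.Perm (Fin (n+1)) :=
  (finSuccEquiv' p).trans ((Equiv.optionCongr π).trans (finSuccEquiv' v).symm)

lemma ins_pivot (π : Equiv.Perm (Fin n)) (p v : Fin (n+1)) : ins π p v p = v := by
  simp [ins, finSuccEquiv'_at, finSuccEquiv'_symm_none]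

lemma ins_succAbove (π : Equiv.Perm (Fin n)) (p v : Fin (n+1)) (i : Fin n) :
    ins π p v (p.succAbove i) = v.succAbove (π i) := by
  simp [ins, finSuccEquiv'_succAbove, finSuccEquiv'_symm_some]

/-- Every strictly monotone map `Fin n → Fin (n+1)` is `succAbove` of its missed point. -/
lemma exists_eq_succAbove {f : Fin n → Fin (n+1)} (hf : StrictMono f) :
    ∃ p : Fin (n+1), f = p.succAbove := by
  have hns : ¬ Function.Surjective f := by
    intro hs
    have := Fintype.card_le_of_surjective f hs
    simp at this
  have hns' : ∃ p, ∀ i, f i ≠ p := by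
    by_contra hall
    push_neg at hall
    exact hns fun b => hall b
  obtain ⟨p, hp⟩ := hns' 
  refine ⟨p, ?_⟩
  have hrange : Set.range f = {p}ᶜ := ?_
  · exact (@StrictMono.range_inj (Fin n) (Fin (n+1)) _ _
      (inferInstance : WellFoundedLT (Fin n)) f p.succAbove hf
      (Fin.strictMono_succAbove p)).mp (by rw [hrange, Fin.range_succAbove])
  apply Set.eq_of_subset_of_ncard_le
  · rintro x ⟨i, rfl⟩; exact hp i
  · have h1 : (Set.range f).ncard = n := by
      rw [← Nat.card_coe_set_eq, Nat.card_range_of_injective hf.injective, Nat.card_eq_fintype_card,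
        Fintype.card_fin]
    have h2 : ({p}ᶜ : Set (Fin (n+1))).ncard = n := by
      rw [← Nat.card_coe_set_eq, Nat.card_eq_fintype_card, Fintype.card_compl_set]
      simp
    rw [h1, h2]
  · exact Set.toFinite _

lemma covers_iff (π : Equiv.Perm (Fin n)) (ρ : Equiv.Perm (Fin (n+1))) :
    Covers ρ π ↔ ∃ p v, ρ = ins π p v := by
  constructor
  · rintro ⟨f, hf, hord⟩
    obtain ⟨p, rfl⟩ := exists_eq_succAbove hf
    have hg : StrictMono (fun i => ρ (p.succAbove (π.symm i))) := by
      intro i j hij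
      have := (hord (π.symm i) (π.symm j)).mp (by simpa using hij)
      simpa using this
    obtain ⟨v, hv⟩ := exists_eq_succAbove hg
    have hv' : ∀ i : Fin n, ρ (p.succAbove i) = v.succAbove (π i) := by
      intro i
      have := congrFun hv (π i)
      simpa using this
    have hpv : ρ p = v := by
      by_contra hne
      obtain ⟨z, hz⟩ := Fin.exists_succAbove_eq hne
      have : ρ (p.succAbove (π.symm z)) = ρ p := by rw [hv' (π.symm z)]; simpa using hz
      exact Fin.succAbove_ne p (π.symm z) (ρ.injective this)
    refine ⟨p, v, ?_⟩
    apply Equiv.ext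
    intro x
    rcases eq_or_ne x p with rfl | hx
    · rw [ins_pivot]; exact hpv
    · obtain ⟨i, rfl⟩ := Fin.exists_succAbove_eq hx
      rw [ins_succAbove]; exact hv' i
  · rintro ⟨p, v, rfl⟩
    refine ⟨p.succAbove, Fin.strictMono_succAbove p, fun i j => ?_⟩
    rw [ins_succAbove, ins_succAbove]
    exact ((Fin.strictMono_succAbove v).lt_iff_lt).symm

/-- Two adjacent pivots act identically away from the critical point. -/
lemma succAbove_adj {x y : Fin n} (h : x ≠ y) :
    (y.castSucc).succAbove x = (y.succ).succAbove x := by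
  rcases h.lt_or_gt with h | h
  · rw [Fin.succAbove_of_castSucc_lt _ _ (by simpa using h),
      Fin.succAbove_of_castSucc_lt _ _ (by simpa using h.le)]
  · rw [Fin.succAbove_of_le_castSucc _ _ (by simpa using h.le),
      Fin.succAbove_of_le_castSucc _ _ (by simpa using h)]

lemma ins_adj₁ (π : Equiv.Perm (Fin n)) (i : Fin n) :
    ins π i.castSucc (π i).castSucc = ins π i.succ (π i).succ := by
  apply Equiv.ext
  intro x
  rcases eq_or_ne x i.castSucc with rfl | hx1
  · rw [ins_pivot]
    have h1 : (i.succ).succAbove i = i.castSucc :=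
      Fin.succAbove_of_castSucc_lt _ _ (Fin.castSucc_lt_succ : i.castSucc < i.succ)
    rw [← h1, ins_succAbove,
      Fin.succAbove_of_castSucc_lt _ _ (Fin.castSucc_lt_succ : (π i).castSucc < (π i).succ)]
  · rcases eq_or_ne x i.succ with rfl | hx2
    · rw [ins_pivot]
      have h1 : (i.castSucc).succAbove i = i.succ :=
        Fin.succAbove_of_le_castSucc _ _ le_rfl
      rw [← h1, ins_succAbove, Fin.succAbove_of_le_castSucc _ _ le_rfl]
    · obtain ⟨a, ha⟩ := Fin.exists_succAbove_eq hx1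
      have hai : a ≠ i := by
        rintro rfl
        exact hx2 (by rw [← ha, Fin.succAbove_of_le_castSucc _ _ le_rfl])
      have hb : (i.succ).succAbove a = x := by rw [← succAbove_adj hai]; exact ha
      have hππ : π a ≠ π i := fun hh => hai (π.injective hh)
      have L : ins π i.castSucc (π i).castSucc x = ((π i).castSucc).succAbove (π a) := by
        rw [← ha, ins_succAbove]
      have R : ins π i.succ (π i).succ x = ((π i).succ).succAbove (π a) := by
        rw [← hb, ins_succAbove]
      rw [L, R]
      exact succAbove_adj hππ

lemma ins_adj₂ (π : Equiv.Perm (Fin n)) (i : Fin n) :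
    ins π i.castSucc (π i).succ = ins π i.succ (π i).castSucc := by
  apply Equiv.ext
  intro x
  rcases eq_or_ne x i.castSucc with rfl | hx1
  · rw [ins_pivot]
    have h1 : (i.succ).succAbove i = i.castSucc :=
      Fin.succAbove_of_castSucc_lt _ _ (Fin.castSucc_lt_succ : i.castSucc < i.succ)
    rw [← h1, ins_succAbove, Fin.succAbove_of_le_castSucc _ _ le_rfl]
  · rcases eq_or_ne x i.succ with rfl | hx2
    · rw [ins_pivot]
      have h1 : (i.castSucc).succAbove i = i.succ :=
        Fin.succAbove_of_le_castSucc _ _ le_rfl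
      rw [← h1, ins_succAbove,
        Fin.succAbove_of_castSucc_lt _ _ (Fin.castSucc_lt_succ : (π i).castSucc < (π i).succ)]
    · obtain ⟨a, ha⟩ := Fin.exists_succAbove_eq hx1
      have hai : a ≠ i := by
        rintro rfl
        exact hx2 (by rw [← ha, Fin.succAbove_of_le_castSucc _ _ le_rfl])
      have hb : (i.succ).succAbove a = x := by rw [← succAbove_adj hai]; exact ha
      have hππ : π a ≠ π i := fun hh => hai (π.injective hh)
      have L : ins π i.castSucc (π i).succ x = ((π i).succ).succAbove (π a) := by
        rw [← ha, ins_succAbove]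
      have R : ins π i.succ (π i).castSucc x = ((π i).castSucc).succAbove (π a) := by
        rw [← hb, ins_succAbove]
      rw [L, R]
      exact (succAbove_adj hππ).symm

/-- The set of "good" (canonical) insertion parameters. -/
def Good (π : Equiv.Perm (Fin n)) : Set (Fin (n+1) × Fin (n+1)) :=
  {pv | ∀ i : Fin n, pv.1 = i.succ → pv.2 ≠ (π i).castSucc ∧ pv.2 ≠ (π i).succ}

lemma collision (π : Equiv.Perm (Fin n)) {p v p' v' : Fin (n+1)}
    (h : ins π p v = ins π p' v') (hlt : p < p') :
    ∃ i : Fin n, p' = i.succ ∧ v' = v.succAbove (π i) := by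
  obtain ⟨k, hk⟩ := Fin.exists_succAbove_eq (show p' ≠ p from hlt.ne')
  have hk' : p' = k.succ := by
    rcases lt_or_ge k.castSucc p with hc | hc
    · rw [Fin.succAbove_of_castSucc_lt _ _ hc] at hk
      exact absurd (hlt.trans (hk ▸ hc)) (lt_irrefl p)
    · rw [Fin.succAbove_of_le_castSucc _ _ hc] at hk
      exact hk.symm
  refine ⟨k, hk', ?_⟩
  have : ins π p v p' = ins π p' v' p' := DFunLike.congr_fun h p'
  rw [ins_pivot] at this
  rw [← this, ← hk, ins_succAbove]

lemma succAbove_mem (v : Fin (n+1)) (x : Fin n) :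
    v.succAbove x = x.castSucc ∨ v.succAbove x = x.succ := by
  rcases lt_or_ge x.castSucc v with hc | hc
  · left; exact Fin.succAbove_of_castSucc_lt _ _ hc
  · right; exact Fin.succAbove_of_le_castSucc _ _ hc

lemma injOn_ins (π : Equiv.Perm (Fin n)) :
    Set.InjOn (fun pv : Fin (n+1) × Fin (n+1) => ins π pv.1 pv.2) (Good π) := by
  rintro ⟨p, v⟩ hpv ⟨p', v'⟩ hpv' h
  simp only at h
  rcases lt_trichotomy p p' with hlt | rfl | hlt
  · obtain ⟨i, rfl, hv'⟩ := collision π h hlt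
    have hgood := hpv' i rfl
    rcases succAbove_mem v (π i) with hc | hc
    · exact absurd (hv'.trans hc) hgood.1
    · exact absurd (hv'.trans hc) hgood.2
  · have hvv : v = v' := by
      have h2 : ins π p v p = ins π p v' p := DFunLike.congr_fun h p
      rwa [ins_pivot, ins_pivot] at h2
    rw [hvv]
  · obtain ⟨i, rfl, hv⟩ := collision π h.symm hlt
    have hgood := hpv i rfl
    rcases succAbove_mem v' (π i) with hc | hc
    · exact absurd (hv.trans hc) hgood.1
    · exact absurd (hv.trans hc) hgood.2

lemma covers_eq_image (π : Equiv.Perm (Fin n)) :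
    {ρ : Equiv.Perm (Fin (n+1)) | Covers ρ π} =
      (fun pv : Fin (n+1) × Fin (n+1) => ins π pv.1 pv.2) '' (Good π) := by
  ext ρ
  simp only [Set.mem_setOf_eq, Set.mem_image, covers_iff]
  constructor
  · rintro ⟨p, v, rfl⟩
    classical
    have hex : ∃ m, ∃ h : m < n+1, ∃ w, ins π p v = ins π ⟨m, h⟩ w :=
      ⟨p.val, p.isLt, v, by simp⟩
    obtain ⟨h0, w, hw⟩ := Nat.find_spec hex
    refine ⟨(⟨Nat.find hex, h0⟩, w), ?_, hw.symm⟩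
    rintro i hi
    have hi' : (⟨Nat.find hex, h0⟩ : Fin (n+1)) = i.succ := hi
    have hfind : Nat.find hex = i.val + 1 := by
      have := congrArg Fin.val hi'
      simpa [Fin.val_succ] using this
    have hlt : (i.castSucc : ℕ) < Nat.find hex := by
      rw [hfind, Fin.coe_castSucc]; omega
    constructor
    · rintro rfl
      have hnew : ins π p v = ins π i.castSucc (π i).succ := by
        rw [hw, hi', ← ins_adj₂]
      exact Nat.find_min hex hlt ⟨i.castSucc.isLt, (π i).succ, by rw [Fin.eta]; exact hnew⟩
    · rintro rfl
      have hnew : ins π p v = ins π i.castSucc (π i).castSucc := by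
        rw [hw, hi', ← ins_adj₁]
      exact Nat.find_min hex hlt ⟨i.castSucc.isLt, (π i).castSucc, by rw [Fin.eta]; exact hnew⟩
  · rintro ⟨⟨p, v⟩, _, h⟩
    exact ⟨p, v, h.symm⟩

lemma good_compl (π : Equiv.Perm (Fin n)) :
    (Good π)ᶜ = (Set.range fun i : Fin n => (i.succ, (π i).castSucc)) ∪
      (Set.range fun i : Fin n => (i.succ, (π i).succ)) := by
  ext ⟨p, v⟩
  simp only [Good, Set.mem_compl_iff, Set.mem_setOf_eq, Set.mem_union, Set.mem_range,
    Prod.mk.injEq, not_forall, Classical.not_imp, not_and_or, not_ne_iff]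
  constructor
  · rintro ⟨i, hp, hv | hv⟩
    · exact Or.inl ⟨i, hp.symm, hv.symm⟩
    · exact Or.inr ⟨i, hp.symm, hv.symm⟩
  · rintro (⟨i, hp, hv⟩ | ⟨i, hp, hv⟩)
    · exact ⟨i, hp.symm, Or.inl hv.symm⟩
    · exact ⟨i, hp.symm, Or.inr hv.symm⟩

lemma good_ncard (π : Equiv.Perm (Fin n)) : (Good π).ncard = n ^ 2 + 1 := by
  have hc : ((Good π)ᶜ).ncard = 2 * n := by
    rw [good_compl]
    rw [Set.ncard_union_eq]
    · have h1 : (Set.range fun i : Fin n => (i.succ, (π i).castSucc)).ncard = n := by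
        rw [← Nat.card_coe_set_eq, Nat.card_range_of_injective, Nat.card_eq_fintype_card,
          Fintype.card_fin]
        intro a b hab
        exact Fin.succ_injective _ (congrArg Prod.fst hab)
      have h2 : (Set.range fun i : Fin n => (i.succ, (π i).succ)).ncard = n := by
        rw [← Nat.card_coe_set_eq, Nat.card_range_of_injective, Nat.card_eq_fintype_card,
          Fintype.card_fin]
        intro a b hab
        exact Fin.succ_injective _ (congrArg Prod.fst hab)
      rw [h1, h2]; ring
    · rw [Set.disjoint_left]
      rintro ⟨p, v⟩ ⟨i, hi⟩ ⟨j, hj⟩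
      have hij : i = j := Fin.succ_injective _
        ((congrArg Prod.fst hi).trans (congrArg Prod.fst hj).symm)
      have hsnd : (π i).castSucc = (π j).succ :=
        (congrArg Prod.snd hi).trans (congrArg Prod.snd hj).symm
      rw [hij] at hsnd
      exact absurd hsnd (Fin.castSucc_lt_succ : (π j).castSucc < (π j).succ).ne
  have htot := Set.ncard_add_ncard_compl (Good π)
  rw [hc, Nat.card_eq_fintype_card] at htot
  simp only [Fintype.card_prod, Fintype.card_fin] at htot
  have hsq : (n + 1) * (n + 1) = n ^ 2 + 2 * n + 1 := by ring
  omega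

end CoveringCountAux

theorem covering_count (n : ℕ) (hn : 1 ≤ n) (π : Equiv.Perm (Fin n)) :
    Set.ncard {ρ : Equiv.Perm (Fin (n+1)) | Covers ρ π} = n ^ 2 + 1 := by
  rw [CoveringCountAux.covers_eq_image π,
    Set.ncard_image_of_injOn (CoveringCountAux.injOn_ins π),
    CoveringCountAux.good_ncard π]
end

section
/- For every n ≥ 2, κ_n ≤ ((n+1)!/(n²+1)) · (1 + log((n²+1)/(n+1))). -/
/-- `kappa n` is the smallest cardinality of a set `A ⊆ S_{n+1}` covering all of `S_n`. -/
noncomputable def kappa (n : ℕ) : ℕ :=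
  sInf {k | ∃ A : Finset (Equiv.Perm (Fin (n+1))), A.card = k ∧
    ∀ π : Equiv.Perm (Fin n), ∃ ρ ∈ A, Covers ρ π}


open Finset


namespace KappaAux

variable {n : ℕ}

/-- Insert a new point at position `p` with value `v` into `π`. -/
def ext (π : Equiv.Perm (Fin n)) (p v : Fin (n+1)) : Equiv.Perm (Fin (n+1)) :=
  (finSuccEquiv' p).trans ((Equiv.optionCongr π).trans (finSuccEquiv' v).symm)

@[simp] lemma ext_apply_self (π : Equiv.Perm (Fin n)) (p v : Fin (n+1)) :
    ext π p v p = v := by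
  simp [ext, finSuccEquiv'_at, finSuccEquiv'_symm_none]

@[simp] lemma ext_apply_succAbove (π : Equiv.Perm (Fin n)) (p v : Fin (n+1)) (i : Fin n) :
    ext π p v (p.succAbove i) = v.succAbove (π i) := by
  simp [ext, finSuccEquiv'_succAbove, finSuccEquiv'_symm_some]

lemma covers_ext (π : Equiv.Perm (Fin n)) (p v : Fin (n+1)) : Covers (ext π p v) π := by
  refine ⟨p.succAbove, Fin.strictMono_succAbove p, fun i j => ?_⟩
  rw [ext_apply_succAbove, ext_apply_succAbove, Fin.succAbove_lt_succAbove_iff]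

lemma ext_key {π : Equiv.Perm (Fin n)} {p p' v v' : Fin (n+1)} (h : p < p')
    (he : ext π p v = ext π p' v') :
    ∃ j : Fin n, p' = j.succ ∧ v' = v.succAbove (π j) := by
  have h0 : p' ≠ 0 := Fin.pos_iff_ne_zero.mp (lt_of_le_of_lt (Fin.zero_le p) h)
  refine ⟨p'.pred h0, (Fin.succ_pred p' h0).symm, ?_⟩
  set j := p'.pred h0 with hj
  have hsj : j.succ = p' := Fin.succ_pred p' h0
  have hle : p ≤ j.castSucc := Fin.le_castSucc_iff.mpr (by rw [hsj]; exact h)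
  have hs : p.succAbove j = p' := by
    rw [Fin.succAbove_of_le_castSucc p j hle, hsj]
  calc v' = ext π p' v' p' := (ext_apply_self π p' v').symm
    _ = ext π p v p' := by rw [he]
    _ = v.succAbove (π j) := by rw [← hs, ext_apply_succAbove]

/-- The parameter set of insertions guaranteed to give distinct extensions. -/
def Tset (π : Equiv.Perm (Fin n)) : Finset (Fin (n+1) × Fin (n+1)) :=
  ({0} ×ˢ univ) ∪ univ.biUnion (fun j : Fin n =>
    ({Fin.succ j} : Finset (Fin (n+1))) ×ˢ ({(π j).castSucc, (π j).succ} : Finset (Fin (n+1)))ᶜ)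

lemma card_Tset (π : Equiv.Perm (Fin n)) : (Tset π).card = n^2 + 1 := by
  rw [Tset, card_union_of_disjoint, card_biUnion]
  · have h1 : (({0} : Finset (Fin (n+1))) ×ˢ (univ : Finset (Fin (n+1)))).card = n + 1 := by
      simp
    have h2 : ∀ j : Fin n,
        (({Fin.succ j} : Finset (Fin (n+1))) ×ˢ
          ({(π j).castSucc, (π j).succ} : Finset (Fin (n+1)))ᶜ).card = n - 1 := by
      intro j
      rw [card_product, card_singleton, one_mul, card_compl, card_insert_of_notMem,
        card_singleton]
      · simp [Fintype.card_fin]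
      · simp only [mem_singleton]
        exact (Fin.castSucc_lt_succ (i := π j)).ne
    rw [h1, Finset.sum_congr rfl (fun j _ => h2 j)]
    simp only [sum_const, card_univ, Fintype.card_fin, smul_eq_mul]
    cases n with
    | zero => simp
    | succ m =>
      simp only [Nat.succ_sub_one]
      ring
  · -- biUnion pairwise disjoint
    intro x _ y _ hxy
    simp only [Finset.disjoint_left]
    intro pv hx hy
    simp only [mem_product, mem_singleton] at hx hy
    exact hxy (Fin.succ_injective _ (hx.1.symm.trans hy.1))
  · -- union disjoint
    simp only [Finset.disjoint_left]
    intro pv h1 h2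
    simp only [mem_product, mem_singleton] at h1
    simp only [mem_biUnion, mem_product, mem_singleton] at h2
    obtain ⟨j, _, hj, _⟩ := h2
    exact Fin.succ_ne_zero j (hj.symm.trans h1.1)

lemma not_collide {π : Equiv.Perm (Fin n)} {p v p' v' : Fin (n+1)} (hlt : p < p')
    (hb : (p', v') ∈ Tset π) (he : ext π p v = ext π p' v') : False := by
  obtain ⟨j, rfl, hv'⟩ := ext_key hlt he
  simp only [Tset, mem_union, mem_product, mem_singleton, mem_biUnion, mem_compl,
    mem_insert, mem_singleton] at hb
  rcases hb with ⟨h0, _⟩ | ⟨j', _, hj', hv⟩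
  · exact Fin.succ_ne_zero j h0
  · have hjj : j' = j := Fin.succ_injective _ hj'.symm
    rw [hjj] at hv
    rcases le_or_gt v ((π j).castSucc) with hc | hc
    · rw [Fin.succAbove_of_le_castSucc v (π j) hc] at hv'
      exact hv (Or.inr hv')
    · rw [Fin.succAbove_of_castSucc_lt v (π j) hc] at hv'
      exact hv (Or.inl hv')

lemma covers_count (π : Equiv.Perm (Fin n))
    [DecidablePred fun ρ : Equiv.Perm (Fin (n+1)) => Covers ρ π] :
    n^2 + 1 ≤ (univ.filter fun ρ : Equiv.Perm (Fin (n+1)) => Covers ρ π).card := by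
  rw [← card_Tset π]
  apply Finset.card_le_card_of_injOn (fun pv => ext π pv.1 pv.2)
  · intro pv _
    simp only [mem_filter, mem_univ, true_and]
    simpa using covers_ext π pv.1 pv.2
  · intro x hx y hy hxy
    by_contra hne
    have h1 : x.1 ≠ y.1 := by
      intro h
      apply hne
      have h2 : x.2 = y.2 := by
        have := congrFun (congrArg (fun e : Equiv.Perm (Fin (n+1)) => (e : Fin (n+1) → Fin (n+1))) hxy) x.1
        simpa [h, ext_apply_self] using this
      exact Prod.ext h h2
    rcases lt_or_gt_of_ne h1 with hlt | hlt
    · exact not_collide hlt (by simpa using hy) hxy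
    · exact not_collide hlt (by simpa using hx) hxy.symm



noncomputable def phi (a : ℝ) (u : ℕ) : ℝ :=
  ∑ k ∈ Finset.range u, 1 / max 1 (((k : ℝ) + 1) * a)

lemma phi_nonneg (a : ℝ) (u : ℕ) : 0 ≤ phi a u := by
  apply Finset.sum_nonneg
  intro k _
  positivity

lemma phi_diff {a : ℝ} (ha : 0 ≤ a) {u' u : ℕ} (h : u' ≤ u) :
    ((u : ℝ) - u') / max 1 ((u : ℝ) * a) ≤ phi a u - phi a u' := by
  have hsplit : phi a u' + ∑ k ∈ Finset.Ico u' u, 1 / max 1 (((k : ℝ) + 1) * a) = phi a u := by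
    simp only [phi, Finset.range_eq_Ico]
    exact Finset.sum_Ico_consecutive _ (Nat.zero_le u') h
  have hterm : ∀ k ∈ Finset.Ico u' u,
      1 / max 1 ((u : ℝ) * a) ≤ 1 / max 1 (((k : ℝ) + 1) * a) := by
    intro k hk
    rw [Finset.mem_Ico] at hk
    have hk1 : ((k : ℝ) + 1) * a ≤ (u : ℝ) * a := by
      apply mul_le_mul_of_nonneg_right _ ha
      exact_mod_cast Nat.succ_le_of_lt hk.2
    apply one_div_le_one_div_of_le
    · positivity
    · exact max_le_max le_rfl hk1
  have hlow : ((u : ℝ) - u') / max 1 ((u : ℝ) * a)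
      ≤ ∑ k ∈ Finset.Ico u' u, 1 / max 1 (((k : ℝ) + 1) * a) := by
    calc ((u : ℝ) - u') / max 1 ((u : ℝ) * a)
        = ∑ _k ∈ Finset.Ico u' u, 1 / max 1 ((u : ℝ) * a) := by
          rw [Finset.sum_const, Nat.card_Ico, nsmul_eq_mul, Nat.cast_sub h]
          ring
      _ ≤ _ := Finset.sum_le_sum hterm
  linarith

noncomputable def psi (a : ℝ) (u : ℕ) : ℝ :=
  if (u : ℝ) * a ≤ 1 then (u : ℝ) else (1 + Real.log ((u : ℝ) * a)) / a

lemma one_sub_inv_le_log {y : ℝ} (hy : 1 ≤ y) : 1 - 1 / y ≤ Real.log y := by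
  have hy0 : 0 < y := lt_of_lt_of_le one_pos hy
  have h := Real.log_le_sub_one_of_pos (x := 1 / y) (by positivity)
  rw [Real.log_div one_ne_zero (ne_of_gt hy0), Real.log_one] at h
  linarith

/-- crossing-case inequality -/
lemma cross_ineq {a y : ℝ} (ha : 0 < a) (hy : 1 < y) (hya : y - a ≤ 1) :
    1 / y ≤ (1 + Real.log y) / a - (y - a) / a := by
  have hy0 : 0 < y := lt_trans one_pos hy
  have hlog : 1 - 1 / y ≤ Real.log y := one_sub_inv_le_log hy.le
  have hLy : y - 1 ≤ Real.log y * y := by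
    have h1 : (1 - 1 / y) * y = y - 1 := by field_simp
    have h2 := mul_le_mul_of_nonneg_right hlog hy0.le
    linarith [h1 ▸ h2]
  have key : a ≤ (1 + Real.log y - y + a) * y := by
    nlinarith [mul_nonneg (sub_nonneg.mpr (show y - 1 ≤ a by linarith))
      (sub_nonneg.mpr hy.le)]
  rw [← sub_div, div_le_div_iff₀ hy0 ha]
  calc 1 * a = a := one_mul a
    _ ≤ (1 + Real.log y - y + a) * y := key
    _ = (1 + Real.log y - (y - a)) * y := by ring

lemma psi_step {a : ℝ} (ha : 0 < a) (k : ℕ) :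
    1 / max 1 (((k : ℝ) + 1) * a) ≤ psi a (k + 1) - psi a k := by
  have hk0 : (0 : ℝ) ≤ (k : ℝ) := Nat.cast_nonneg k
  set K : ℝ := (k : ℝ) + 1 with hK
  have hK1 : 1 ≤ K := by rw [hK]; linarith
  have hK0 : 0 < K := lt_of_lt_of_le one_pos hK1
  have hcast : ((k + 1 : ℕ) : ℝ) = K := by push_cast [hK]; ring
  by_cases h1 : K * a ≤ 1
  · have h2 : (k : ℝ) * a ≤ 1 := by nlinarith
    rw [psi, psi, if_pos (by rw [hcast]; exact h1), if_pos h2, hcast,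
      max_eq_left h1]
    rw [hK]
    simp
  · push_neg at h1
    rw [max_eq_right (le_of_lt h1)]
    by_cases h2 : (k : ℝ) * a ≤ 1
    · -- crossing case
      rw [psi, psi, if_neg (by rw [hcast]; linarith), if_pos h2, hcast]
      have hka : (k : ℝ) = (K * a - a) / a := by
        field_simp [hK]
        ring
      rw [hka]
      exact cross_ineq ha h1 (by rw [hK] at *; nlinarith)
    · push_neg at h2
      rw [psi, psi, if_neg (by rw [hcast]; linarith), if_neg (by linarith), hcast]
      have hkpos : (0 : ℝ) < (k : ℝ) := by
        rcases lt_or_eq_of_le hk0 with h | h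
        · exact h
        · exfalso; rw [← h] at h2; simp at h2; linarith
      have hka : 0 < (k : ℝ) * a := mul_pos hkpos ha
      have hKa : 0 < K * a := mul_pos hK0 ha
      have hd : Real.log (K * a) - Real.log ((k : ℝ) * a) = Real.log (K / (k : ℝ)) := by
        rw [← Real.log_div (ne_of_gt hKa) (ne_of_gt hka)]
        congr 1
        field_simp
      have hlb : 1 / K ≤ Real.log (K / (k : ℝ)) := by
        have h := Real.log_le_sub_one_of_pos (show (0 : ℝ) < (k : ℝ) / K by positivity)
        rw [Real.log_div (ne_of_gt hkpos) (ne_of_gt hK0)] at h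
        have heq : (k : ℝ) / K - 1 = -(1 / K) := by
          rw [hK]; field_simp; ring
        rw [Real.log_div (ne_of_gt hK0) (ne_of_gt hkpos)]
        rw [heq] at h
        linarith
      have hdiff : 1 / K ≤ Real.log (K * a) - Real.log ((k : ℝ) * a) := hd ▸ hlb
      have goal2 : 1 / (K * a) ≤ (Real.log (K * a) - Real.log ((k : ℝ) * a)) / a := by
        rw [div_le_div_iff₀ hKa ha]
        calc 1 * a = (1 / K) * (K * a) := by field_simp
          _ ≤ (Real.log (K * a) - Real.log ((k : ℝ) * a)) * (K * a) :=
            mul_le_mul_of_nonneg_right hdiff hKa.le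
      have heq : (1 + Real.log (K * a)) / a - (1 + Real.log ((k : ℝ) * a)) / a
          = (Real.log (K * a) - Real.log ((k : ℝ) * a)) / a := by ring
      linarith

lemma phi_le_psi {a : ℝ} (ha : 0 < a) (u : ℕ) : phi a u ≤ psi a u := by
  induction u with
  | zero => simp [phi, psi]
  | succ k ih =>
    have hstep := psi_step ha k
    rw [phi, Finset.sum_range_succ, ← phi]
    linarith

lemma greedy {α β : Type*} [Fintype α] [DecidableEq α] [DecidableEq β]
    (R : α → β → Prop) [∀ a b, Decidable (R a b)] (r : ℕ) (hr : 1 ≤ r)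
    (hcount : ∀ b : β, r ≤ (univ.filter fun a => R a b).card) :
    ∀ U : Finset β, ∃ A : Finset α, (∀ b ∈ U, ∃ a ∈ A, R a b) ∧
      (A.card : ℝ) ≤ phi ((r : ℝ) / (Fintype.card α : ℝ)) U.card := by
  intro U
  induction U using Finset.strongInduction with
  | _ U IH =>
    rcases U.eq_empty_or_nonempty with rfl | hne
    · exact ⟨∅, by simp, by simpa [phi] using le_refl (0:ℝ)⟩
    obtain ⟨b0, hb0⟩ := hne
    have hN1 : 1 ≤ Fintype.card α := by
      have h1 := hcount b0
      have h2 : (univ.filter fun a => R a b0).card ≤ Fintype.card α := by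
        rw [← Finset.card_univ]
        exact Finset.card_filter_le _ _
      omega
    have key : U.card * r ≤ ∑ a : α, (U.filter fun b => R a b).card := by
      have swap : ∑ a : α, (U.filter fun b => R a b).card
          = ∑ b ∈ U, (univ.filter fun a => R a b).card := by
        simp only [Finset.card_filter]
        rw [Finset.sum_comm]
      rw [swap]
      calc U.card * r = ∑ _b ∈ U, r := by rw [Finset.sum_const, smul_eq_mul]
        _ ≤ _ := Finset.sum_le_sum (fun b _ => hcount b)
    have pigeon : ∃ a0 : α, U.card * r ≤ Fintype.card α * (U.filter fun b => R a0 b).card := by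
      have hsum : ∑ _a : α, U.card * r
          ≤ ∑ a : α, Fintype.card α * (U.filter fun b => R a b).card := by
        have h1 : ∑ _a : α, U.card * r = Fintype.card α * (U.card * r) := by
          rw [Finset.sum_const, smul_eq_mul, Finset.card_univ]
        have h2 : ∑ a : α, Fintype.card α * (U.filter fun b => R a b).card
            = Fintype.card α * ∑ a : α, (U.filter fun b => R a b).card := by
          rw [Finset.mul_sum]
        rw [h1, h2]
        exact Nat.mul_le_mul_left _ key
      have hna : Nonempty α := Fintype.card_pos_iff.mp hN1
      obtain ⟨a0, _, ha0⟩ := Finset.exists_le_of_sum_le Finset.univ_nonempty hsum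
      exact ⟨a0, ha0⟩
    obtain ⟨a0, ha0⟩ := pigeon
    have hcov_card : 1 ≤ (U.filter fun b => R a0 b).card := by
      by_contra hc
      push_neg at hc
      have hz : (U.filter fun b => R a0 b).card = 0 := by omega
      rw [hz, Nat.mul_zero] at ha0
      have hU1 : 1 ≤ U.card := Finset.card_pos.mpr ⟨b0, hb0⟩
      have : 1 ≤ U.card * r := Nat.mul_le_mul hU1 hr
      omega
    have hss : (U.filter fun b => ¬ R a0 b) ⊂ U := by
      rw [Finset.filter_ssubset]
      obtain ⟨b, hb⟩ := Finset.card_pos.mp hcov_card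
      rw [Finset.mem_filter] at hb
      exact ⟨b, hb.1, not_not_intro hb.2⟩
    obtain ⟨A', hA'cov, hA'card⟩ := IH _ hss
    refine ⟨insert a0 A', ?_, ?_⟩
    · intro b hb
      by_cases hR : R a0 b
      · exact ⟨a0, Finset.mem_insert_self _ _, hR⟩
      · obtain ⟨a, haA, haR⟩ := hA'cov b (Finset.mem_filter.mpr ⟨hb, hR⟩)
        exact ⟨a, Finset.mem_insert_of_mem haA, haR⟩
    · have haa0 : (0:ℝ) ≤ (r : ℝ) / (Fintype.card α : ℝ) := by positivity
      have hcard' : (U.filter fun b => ¬ R a0 b).card ≤ U.card :=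
        Finset.card_le_card hss.subset
      have hdiff := phi_diff haa0 hcard'
      have hpart : (U.filter fun b => R a0 b).card
          + (U.filter fun b => ¬ R a0 b).card = U.card :=
        Finset.card_filter_add_card_filter_not _
      have hc' : ((U.card : ℝ) - ((U.filter fun b => ¬ R a0 b).card : ℝ))
          = ((U.filter fun b => R a0 b).card : ℝ) := by
        rw [← hpart]
        push_cast
        ring
      have hNpos : (0:ℝ) < (Fintype.card α : ℝ) := by exact_mod_cast hN1
      have hmaxle : max 1 ((U.card : ℝ) * ((r : ℝ) / (Fintype.card α : ℝ)))
          ≤ (U.card : ℝ) - ((U.filter fun b => ¬ R a0 b).card : ℝ) := by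
        rw [hc']
        apply max_le
        · exact_mod_cast hcov_card
        · rw [← mul_div_assoc, div_le_iff₀ hNpos]
          have hcast : ((U.card * r : ℕ) : ℝ)
              ≤ ((Fintype.card α * (U.filter fun b => R a0 b).card : ℕ) : ℝ) := by
            exact_mod_cast ha0
          push_cast at hcast
          linarith
      have hm : (0:ℝ) < max 1 ((U.card : ℝ) * ((r : ℝ) / (Fintype.card α : ℝ))) :=
        lt_of_lt_of_le one_pos (le_max_left _ _)
      have h1le : (1:ℝ) ≤ phi ((r : ℝ) / (Fintype.card α : ℝ)) U.card
          - phi ((r : ℝ) / (Fintype.card α : ℝ)) (U.filter fun b => ¬ R a0 b).card := by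
        have h2 : (1:ℝ) ≤ ((U.card : ℝ) - ((U.filter fun b => ¬ R a0 b).card : ℝ))
            / max 1 ((U.card : ℝ) * ((r : ℝ) / (Fintype.card α : ℝ))) := by
          rw [le_div_iff₀ hm]
          linarith
        linarith
      have hins : (((insert a0 A').card : ℕ) : ℝ) ≤ (A'.card : ℝ) + 1 := by
        exact_mod_cast Finset.card_insert_le a0 A'
      linarith


end KappaAux


theorem kappa_upper_bound (n : ℕ) (hn : 2 ≤ n) :
    (kappa n : ℝ) ≤ ((n+1).factorial : ℝ) / ((n : ℝ)^2 + 1) *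
      (1 + Real.log (((n : ℝ)^2 + 1) / ((n : ℝ) + 1))) := by
  classical
  obtain ⟨A, hcov, hcard⟩ := KappaAux.greedy
      (fun (ρ : Equiv.Perm (Fin (n+1))) (π : Equiv.Perm (Fin n)) => Covers ρ π)
      (n^2+1) (by omega) (fun π => KappaAux.covers_count π) Finset.univ
  have hk : kappa n ≤ A.card :=
    Nat.sInf_le ⟨A, rfl, fun π => hcov π (Finset.mem_univ π)⟩
  have hN : Fintype.card (Equiv.Perm (Fin (n+1))) = (n+1).factorial := by
    rw [Fintype.card_perm, Fintype.card_fin]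
  have hm : (Finset.univ : Finset (Equiv.Perm (Fin n))).card = n.factorial := by
    rw [Finset.card_univ, Fintype.card_perm, Fintype.card_fin]
  set a : ℝ := ((n^2+1 : ℕ) : ℝ) / ((Fintype.card (Equiv.Perm (Fin (n+1)))) : ℝ) with ha_def
  have hfacpos : (0:ℝ) < ((n+1).factorial : ℝ) := by exact_mod_cast Nat.factorial_pos _
  have ha : a = ((n:ℝ)^2+1) / ((n+1).factorial : ℝ) := by
    rw [ha_def, hN]; push_cast; ring
  have hapos : 0 < a := by rw [ha]; positivity
  have hphi := KappaAux.phi_le_psi hapos (n.factorial)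
  have hma : ((n.factorial : ℕ) : ℝ) * a = ((n:ℝ)^2+1)/((n:ℝ)+1) := by
    rw [ha]
    have hfs : (((n+1).factorial : ℕ) : ℝ) = ((n:ℝ)+1) * ((n.factorial : ℕ) : ℝ) := by
      rw [Nat.factorial_succ]; push_cast; ring
    have hfp : (0:ℝ) < ((n.factorial : ℕ) : ℝ) := by exact_mod_cast Nat.factorial_pos n
    rw [hfs]
    field_simp
  have hma1 : ¬ (((n.factorial : ℕ) : ℝ) * a ≤ 1) := by
    rw [hma]
    push_neg
    rw [lt_div_iff₀ (by positivity)]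
    have h2n : (2:ℝ) ≤ (n:ℝ) := by exact_mod_cast hn
    nlinarith
  have hpsi : KappaAux.psi a n.factorial = ((n+1).factorial : ℝ) / ((n : ℝ)^2 + 1) *
      (1 + Real.log (((n : ℝ)^2 + 1) / ((n : ℝ) + 1))) := by
    rw [KappaAux.psi, if_neg hma1, hma, ha, div_div_eq_mul_div]
    ring
  calc (kappa n : ℝ) ≤ (A.card : ℝ) := by exact_mod_cast hk
    _ ≤ KappaAux.phi a (Finset.univ : Finset (Equiv.Perm (Fin n))).card := hcard
    _ = KappaAux.phi a n.factorial := by rw [hm]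
    _ ≤ KappaAux.psi a n.factorial := hphi
    _ = _ := hpsi
end

section
/- For every fixed integer λ ≥ 2 there exist a constant C > 0 and an integer N such that for all n ≥ N, κ_{n,λ} ≤ ((n+1)!/(n²+1)) · (log n + (λ−1) log log n + C). -/
open scoped Classical

/-- `kappaMulti n lam` is the smallest cardinality of a set `A ⊆ S_{n+1}` such that every
`π ∈ S_n` is covered by at least `lam` distinct elements of `A`. -/
noncomputable def kappaMulti (n lam : ℕ) : ℕ :=
  sInf {k | ∃ A : Finset (Equiv.Perm (Fin (n+1))), A.card = k ∧
    ∀ π : Equiv.Perm (Fin n),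
      lam ≤ {ρ ∈ (A : Set (Equiv.Perm (Fin (n+1)))) | Covers ρ π}.ncard}

namespace KP

variable {n : ℕ}

noncomputable def ins (π : Equiv.Perm (Fin n)) (p v : Fin (n+1)) : Equiv.Perm (Fin (n+1)) :=
  Equiv.ofBijective (p.insertNth v (fun j => v.succAbove (π j)))
    (by
      refine (Finite.injective_iff_bijective).1 ?_
      intro a b hab
      rcases eq_or_ne a p with rfl | ha
      · rcases eq_or_ne b a with rfl | hb
        · rfl
        · obtain ⟨j, rfl⟩ := Fin.exists_succAbove_eq hb
          rw [Fin.insertNth_apply_same, Fin.insertNth_apply_succAbove] at hab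
          exact absurd hab.symm (Fin.succAbove_ne v (π j))
      · obtain ⟨j, rfl⟩ := Fin.exists_succAbove_eq ha
        rcases eq_or_ne b p with rfl | hb
        · rw [Fin.insertNth_apply_same, Fin.insertNth_apply_succAbove] at hab
          exact absurd hab (Fin.succAbove_ne v (π j))
        · obtain ⟨k, rfl⟩ := Fin.exists_succAbove_eq hb
          rw [Fin.insertNth_apply_succAbove, Fin.insertNth_apply_succAbove] at hab
          have := Fin.succAbove_right_injective (p := v) hab
          rw [π.injective this])

@[simp] lemma ins_apply_same (π : Equiv.Perm (Fin n)) (p v : Fin (n+1)) :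
    ins π p v p = v := by
  simp [ins, Equiv.ofBijective]

@[simp] lemma ins_apply_succAbove (π : Equiv.Perm (Fin n)) (p v : Fin (n+1)) (j : Fin n) :
    ins π p v (p.succAbove j) = v.succAbove (π j) := by
  simp [ins, Equiv.ofBijective]

lemma covers_ins (π : Equiv.Perm (Fin n)) (p v : Fin (n+1)) : Covers (ins π p v) π := by
  refine ⟨p.succAbove, Fin.strictMono_succAbove p, fun i j => ?_⟩
  rw [ins_apply_succAbove, ins_apply_succAbove,
    (Fin.strictMono_succAbove v).lt_iff_lt]


def badPair (π : Equiv.Perm (Fin n)) (pv : Fin (n+1) × Fin (n+1)) : Prop :=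
  ∃ j : Fin n, pv.1 = j.succ ∧ (pv.2 = (π j).castSucc ∨ pv.2 = (π j).succ)

lemma ins_eq_bad (π : Equiv.Perm (Fin n)) {p v p' v' : Fin (n+1)} (hlt : p' < p)
    (h : ins π p v = ins π p' v') : badPair π (p, v) := by
  have hlt' : (p' : ℕ) < (p : ℕ) := hlt
  have hpn : (p : ℕ) < n + 1 := p.isLt
  have hj : (p : ℕ) - 1 < n := by omega
  set j₀ : Fin n := ⟨(p:ℕ)-1, hj⟩ with hj₀
  have hpj : p = j₀.succ := by
    apply Fin.ext; simp [Fin.val_succ, hj₀]; omega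
  have hsa : p'.succAbove j₀ = p := by
    rw [Fin.succAbove_of_le_castSucc]
    · exact (Fin.ext (by simp [Fin.val_succ, hj₀]; omega))
    · rw [Fin.le_def]; simp [hj₀]; omega
  have hv : v = v'.succAbove (π j₀) := by
    have h2 := congrArg (fun ρ : Equiv.Perm (Fin (n+1)) => ρ p) h
    rw [ins_apply_same] at h2
    rw [← hsa, ins_apply_succAbove] at h2
    exact h2
  refine ⟨j₀, hpj, ?_⟩
  rcases lt_or_ge (π j₀).castSucc v' with hc | hc
  · left; rw [hv, Fin.succAbove_of_castSucc_lt _ _ hc]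
  · right; rw [hv, Fin.succAbove_of_le_castSucc _ _ hc]

lemma card_covers_ge (π : Equiv.Perm (Fin n)) :
    n ^ 2 + 1 ≤ (Finset.univ.filter (fun ρ => Covers ρ π)).card := by
  classical
  set G := Finset.univ.filter (fun pv : Fin (n+1) × Fin (n+1) => ¬ badPair π pv) with hG
  have hinj : ∀ pv ∈ G, ∀ pv' ∈ G,
      ins π pv.1 pv.2 = ins π pv'.1 pv'.2 → pv = pv' := by
    rintro ⟨p, v⟩ hpv ⟨p', v'⟩ hpv' heq
    simp only [hG, Finset.mem_filter] at hpv hpv'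
    rcases lt_trichotomy p' p with hlt | hEq | hlt
    · exact absurd (ins_eq_bad π hlt heq) hpv.2
    · subst hEq
      have : v = v' := by
        have h2 := congrArg (fun ρ : Equiv.Perm (Fin (n+1)) => ρ p') heq
        simpa using h2
      simp [this]
    · exact absurd (ins_eq_bad π hlt heq.symm) hpv'.2
  have hmaps : ∀ pv ∈ G, ins π pv.1 pv.2 ∈ Finset.univ.filter (fun ρ => Covers ρ π) := by
    intro pv _
    simp [covers_ins]
  have hcard := Finset.card_le_card_of_injOn (fun pv : Fin (n+1) × Fin (n+1) => ins π pv.1 pv.2) (fun pv h => hmaps pv h)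
    (fun pv h pv' h' => hinj pv h pv' h')
  -- card of G
  have hbadsub : Finset.univ.filter (fun pv : Fin (n+1) × Fin (n+1) => badPair π pv) ⊆
      Finset.univ.biUnion (fun j : Fin n =>
        {(j.succ, (π j).castSucc), (j.succ, (π j).succ)}) := by
    intro pv hpv
    simp only [Finset.mem_filter] at hpv
    obtain ⟨j, h1, h2⟩ := hpv.2
    simp only [Finset.mem_biUnion, Finset.mem_univ, Finset.mem_insert, Finset.mem_singleton]
    refine ⟨j, True.intro, ?_⟩
    rcases h2 with h2 | h2
    · left; rw [← h1, ← h2]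
    · right; rw [← h1, ← h2]
  have hbadcard : (Finset.univ.filter (fun pv : Fin (n+1) × Fin (n+1) => badPair π pv)).card
      ≤ 2 * n := by
    refine le_trans (Finset.card_le_card hbadsub) ?_
    refine le_trans (Finset.card_biUnion_le) ?_
    refine le_trans (Finset.sum_le_sum (fun j _ => Finset.card_insert_le _ _)) ?_
    simp [mul_comm]
  have hGeq : G = Finset.univ \ Finset.univ.filter (fun pv : Fin (n+1) × Fin (n+1) => badPair π pv) := by
    rw [hG, Finset.filter_not]
  have hsplit : G.card = (Finset.univ : Finset (Fin (n+1) × Fin (n+1))).card -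
      (Finset.univ.filter (fun pv : Fin (n+1) × Fin (n+1) => badPair π pv)).card := by
    rw [hGeq, Finset.card_sdiff_of_subset (Finset.filter_subset _ _)]
  have huniv : (Finset.univ : Finset (Fin (n+1) × Fin (n+1))).card = (n+1) * (n+1) := by
    simp [Finset.card_univ]
  have hGcard : n ^ 2 + 1 ≤ G.card := by
    have : (n+1) * (n+1) = n ^ 2 + 2 * n + 1 := by ring
    omega
  exact le_trans hGcard hcard

def encode {α : Type*} [DecidableEq α] {m : ℕ} (I : Finset (Fin m)) (t : Fin m → α)
    (i : Fin m) : α ⊕ Fin m :=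
  if h : i ∉ I ∧ (I.filter (fun i₀ => t i₀ = t i)).Nonempty
  then Sum.inr ((I.filter (fun i₀ => t i₀ = t i)).min' h.2)
  else Sum.inl (t i)

lemma count_TI {α : Type*} [Fintype α] [DecidableEq α] {m : ℕ} (W : Finset α)
    (I : Finset (Fin m)) :
    (Finset.univ.filter (fun t : Fin m → α =>
      (∀ i ∈ I, t i ∈ W) ∧ ∀ i, i ∉ I → t i ∈ W → ∃ i₀ ∈ I, t i₀ = t i)).card ≤
    W.card ^ I.card * (Fintype.card α - W.card + I.card) ^ (m - I.card) := by
  classical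
  set T := Finset.univ.filter (fun t : Fin m → α =>
      (∀ i ∈ I, t i ∈ W) ∧ ∀ i, i ∉ I → t i ∈ W → ∃ i₀ ∈ I, t i₀ = t i) with hT
  set target := Fintype.piFinset (fun i : Fin m =>
    if i ∈ I then W.image Sum.inl
    else ((Finset.univ \ W).image Sum.inl ∪ I.image Sum.inr)) with htarget
  have hmemT : ∀ t ∈ T, (∀ i ∈ I, t i ∈ W) ∧ ∀ i, i ∉ I → t i ∈ W → ∃ i₀ ∈ I, t i₀ = t i := by
    intro t ht; rw [hT, Finset.mem_filter] at ht; exact ht.2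
  have hencI : ∀ (t : Fin m → α), ∀ i ∈ I, encode I t i = Sum.inl (t i) := by
    intro t i hi
    rw [encode, dif_neg]
    exact fun h => h.1 hi
  have hencW : ∀ t ∈ T, ∀ i, i ∉ I → t i ∈ W →
      ∃ i₀ ∈ I, t i₀ = t i ∧ encode I t i = Sum.inr i₀ := by
    intro t ht i hiI hiW
    obtain ⟨i₀, hi₀, hti₀⟩ := (hmemT t ht).2 i hiI hiW
    have hne : (I.filter (fun j => t j = t i)).Nonempty := ⟨i₀, Finset.mem_filter.2 ⟨hi₀, hti₀⟩⟩
    have hmin := Finset.min'_mem (I.filter (fun j => t j = t i)) hne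
    rw [Finset.mem_filter] at hmin
    refine ⟨_, hmin.1, hmin.2, ?_⟩
    rw [encode, dif_pos ⟨hiI, hne⟩]
  have hencNW : ∀ t ∈ T, ∀ i, t i ∉ W → encode I t i = Sum.inl (t i) := by
    intro t ht i hiW
    rw [encode, dif_neg]
    rintro ⟨hiI, hne⟩
    have hmin := Finset.min'_mem (I.filter (fun j => t j = t i)) hne
    rw [Finset.mem_filter] at hmin
    exact hiW (hmin.2 ▸ (hmemT t ht).1 _ hmin.1)
  have hmaps : ∀ t ∈ T, encode I t ∈ target := by
    intro t ht
    rw [htarget, Fintype.mem_piFinset]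
    intro i
    by_cases hi : i ∈ I
    · rw [if_pos hi, hencI t i hi]
      exact Finset.mem_image_of_mem _ ((hmemT t ht).1 i hi)
    · rw [if_neg hi]
      by_cases hw : t i ∈ W
      · obtain ⟨i₀, hi₀, _, he⟩ := hencW t ht i hi hw
        rw [he]
        exact Finset.mem_union_right _ (Finset.mem_image_of_mem _ hi₀)
      · rw [hencNW t ht i hw]
        exact Finset.mem_union_left _
          (Finset.mem_image_of_mem _ (Finset.mem_sdiff.2 ⟨Finset.mem_univ _, hw⟩))
  have hinj : Set.InjOn (encode I) (T : Set (Fin m → α)) := by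
    intro t ht t' ht' heq
    have hIeq : ∀ i ∈ I, t i = t' i := by
      intro i hi
      have h2 := congrFun heq i
      rw [hencI t i hi, hencI t' i hi] at h2
      injection h2
    funext i
    by_cases hi : i ∈ I
    · exact hIeq i hi
    by_cases hw : t i ∈ W
    · obtain ⟨a, ha, hta, hea⟩ := hencW t ht i hi hw
      have hw' : t' i ∈ W := by
        by_contra hw'
        have h2 := congrFun heq i
        rw [hea, hencNW t' ht' i hw'] at h2
        injection h2
      obtain ⟨b, hb, htb, heb⟩ := hencW t' ht' i hi hw'
      have h2 := congrFun heq i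
      rw [hea, heb] at h2
      have hab : a = b := by injection h2
      rw [← hta, hIeq a ha, hab, htb]
    · have hw' : t' i ∉ W := by
        intro hw'
        obtain ⟨b, hb, htb, heb⟩ := hencW t' ht' i hi hw'
        have h2 := congrFun heq i
        rw [hencNW t ht i hw, heb] at h2
        injection h2
      have h2 := congrFun heq i
      rw [hencNW t ht i hw, hencNW t' ht' i hw'] at h2
      injection h2
  have hcard := Finset.card_le_card_of_injOn (encode I) hmaps hinj
  refine le_trans hcard ?_
  rw [htarget, Fintype.card_piFinset]
  have hfac : ∀ i : Fin m,
      ((if i ∈ I then W.image (Sum.inl : α → α ⊕ Fin m)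
        else ((Finset.univ \ W).image Sum.inl ∪ I.image Sum.inr)).card)
      = if i ∈ I then W.card else (Fintype.card α - W.card + I.card) := by
    intro i
    by_cases hi : i ∈ I
    · rw [if_pos hi, if_pos hi, Finset.card_image_of_injective _ Sum.inl_injective]
    · rw [if_neg hi, if_neg hi]
      have hdisj : Disjoint ((Finset.univ \ W).image (Sum.inl : α → α ⊕ Fin m))
          (I.image Sum.inr) := by
        rw [Finset.disjoint_left]
        intro x hx hx'
        obtain ⟨a, _, rfl⟩ := Finset.mem_image.1 hx
        obtain ⟨b, _, hb⟩ := Finset.mem_image.1 hx'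
        exact Sum.inl_ne_inr hb.symm
      rw [Finset.card_union_of_disjoint hdisj,
        Finset.card_image_of_injective _ Sum.inl_injective,
        Finset.card_image_of_injective _ Sum.inr_injective,
        Finset.card_sdiff_of_subset (Finset.subset_univ W), Finset.card_univ]
  refine le_of_eq ?_
  calc (∏ i : Fin m, ((if i ∈ I then W.image (Sum.inl : α → α ⊕ Fin m)
        else ((Finset.univ \ W).image Sum.inl ∪ I.image Sum.inr)).card))
      = ∏ i : Fin m, (if i ∈ I then W.card else (Fintype.card α - W.card + I.card)) := by
        exact Finset.prod_congr rfl (fun i _ => hfac i)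
    _ = W.card ^ I.card * (Fintype.card α - W.card + I.card) ^ (m - I.card) := by
        rw [Finset.prod_ite (fun _ => W.card) (fun _ => Fintype.card α - W.card + I.card),
          Finset.prod_const, Finset.prod_const]
        have h1 : Finset.univ.filter (fun x => x ∈ I) = I := by ext x; simp
        have h2 : (Finset.univ.filter (fun x : Fin m => ¬ x ∈ I)).card = m - I.card := by
          rw [Finset.filter_not, Finset.card_sdiff_of_subset (Finset.filter_subset _ _), h1,
            Finset.card_univ, Fintype.card_fin]
        rw [h1, h2]

lemma count_bad_tuples {α : Type*} [Fintype α] [DecidableEq α] (W : Finset α) (m r : ℕ) :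
    (Finset.univ.filter
      (fun t : Fin m → α => ((Finset.univ.image t) ∩ W).card ≤ r)).card ≤
    ∑ j ∈ Finset.range (r+1),
      m.choose j * (W.card ^ j * (Fintype.card α - W.card + j) ^ (m - j)) := by
  classical
  have hsub : (Finset.univ.filter
      (fun t : Fin m → α => ((Finset.univ.image t) ∩ W).card ≤ r)) ⊆
      (Finset.range (r+1)).biUnion (fun j =>
        (Finset.powersetCard j (Finset.univ : Finset (Fin m))).biUnion (fun I =>
          Finset.univ.filter (fun t : Fin m → α =>
            (∀ i ∈ I, t i ∈ W) ∧ ∀ i, i ∉ I → t i ∈ W → ∃ i₀ ∈ I, t i₀ = t i))) := by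
    intro t ht
    rw [Finset.mem_filter] at ht
    set I := Finset.univ.filter (fun i : Fin m => t i ∈ W ∧ ∀ i', i' < i → t i' ≠ t i) with hI
    have hIprop : ∀ i ∈ I, t i ∈ W ∧ ∀ i', i' < i → t i' ≠ t i := by
      intro i hi; rw [hI, Finset.mem_filter] at hi; exact hi.2
    have hIcard : I.card ≤ r := by
      refine le_trans ?_ ht.2
      have hinj : Set.InjOn t I := by
        intro i hi i' hi' hii
        rcases lt_trichotomy i i' with h | h | h
        · exact absurd hii ((hIprop i' hi').2 i h)
        · exact h
        · exact absurd hii.symm ((hIprop i hi).2 i' h)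
      have h1 : I.card = (I.image t).card := (Finset.card_image_of_injOn hinj).symm
      rw [h1]
      refine Finset.card_le_card ?_
      intro w hw
      obtain ⟨i, hi, rfl⟩ := Finset.mem_image.1 hw
      exact Finset.mem_inter.2 ⟨Finset.mem_image_of_mem t (Finset.mem_univ i), (hIprop i hi).1⟩
    refine Finset.mem_biUnion.2 ⟨I.card, Finset.mem_range.2 (by omega), ?_⟩
    refine Finset.mem_biUnion.2 ⟨I, Finset.mem_powersetCard.2 ⟨Finset.subset_univ I, rfl⟩, ?_⟩
    rw [Finset.mem_filter]
    refine ⟨Finset.mem_univ _, fun i hi => (hIprop i hi).1, ?_⟩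
    intro i hiI hiW
    set s := Finset.univ.filter (fun i' : Fin m => t i' = t i) with hs
    have hsne : s.Nonempty := ⟨i, by simp [hs]⟩
    have hi₀s := Finset.mem_filter.1 (Finset.min'_mem s hsne)
    refine ⟨s.min' hsne, ?_, hi₀s.2⟩
    rw [hI, Finset.mem_filter]
    refine ⟨Finset.mem_univ _, by rw [hi₀s.2]; exact hiW, ?_⟩
    intro i' hlt heq
    have hmem : i' ∈ s := by
      rw [hs, Finset.mem_filter]
      exact ⟨Finset.mem_univ _, by rw [heq, hi₀s.2]⟩
    exact absurd (Finset.min'_le s i' hmem) (not_le.2 hlt)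
  refine le_trans (Finset.card_le_card hsub) ?_
  refine le_trans (Finset.card_biUnion_le) (Finset.sum_le_sum (fun j hj => ?_))
  refine le_trans (Finset.card_biUnion_le) ?_
  refine le_trans (Finset.sum_le_sum (fun I hIm => le_trans (count_TI W I)
    (le_of_eq (by rw [(Finset.mem_powersetCard.1 hIm).2])))) ?_
  rw [Finset.sum_const, Finset.card_powersetCard, Finset.card_univ, Fintype.card_fin,
    smul_eq_mul]

lemma fact5 : ∀ n : ℕ, 31 ≤ n → n ^ 5 ≤ (n+1).factorial := by
  intro n hn
  induction n, hn using Nat.le_induction with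
  | base => norm_num [Nat.factorial]
  | succ k hk ih =>
    have h1 : (k+1) ^ 5 ≤ 2 * k ^ 5 := by
      have e1 : 1 ≤ k := by omega
      have h3 : k^3 ≤ k^4 := Nat.pow_le_pow_right e1 (by omega)
      have h2 : k^2 ≤ k^4 := Nat.pow_le_pow_right e1 (by omega)
      have h4 : k ≤ k^4 := le_trans (le_of_eq (pow_one k).symm) (Nat.pow_le_pow_right e1 (by omega))
      have h5 : 1 ≤ k^4 := Nat.one_le_pow _ _ (by omega)
      have h6 : 31 * k^4 ≤ k^5 := by
        have : 31 * k^4 ≤ k * k^4 := Nat.mul_le_mul_right _ hk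
        calc 31 * k^4 ≤ k * k^4 := this
          _ = k^5 := by ring
      nlinarith
    calc (k+1) ^ 5 ≤ 2 * k ^ 5 := h1
      _ ≤ 2 * (k+1).factorial := by omega
      _ ≤ (k+2) * (k+1).factorial := by
          have : 2 ≤ k + 2 := by omega
          exact Nat.mul_le_mul_right _ this
      _ = (k+2).factorial := rfl

lemma ev_loglog (c : ℝ) (hc : 0 < c) : ∀ᶠ n : ℕ in Filter.atTop,
    c * Real.log (Real.log n) + 1 ≤ Real.log n := by
  have h1 : ∀ᶠ y : ℝ in Filter.atTop, c * Real.log y + 1 ≤ y := by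
    have h2 := (Real.isLittleO_log_id_atTop).def (show (0:ℝ) < 1/(2*c) by positivity)
    filter_upwards [h2, Filter.eventually_ge_atTop (2:ℝ)] with y hy h2y
    rw [Real.norm_eq_abs, Real.norm_eq_abs, id_eq] at hy
    have h0y : (0:ℝ) ≤ y := by linarith
    have hlog : Real.log y ≤ 1/(2*c) * y := by
      rw [abs_of_nonneg h0y] at hy
      exact le_trans (le_abs_self _) hy
    have : c * Real.log y ≤ y / 2 := by
      calc c * Real.log y ≤ c * (1/(2*c) * y) := by
            exact mul_le_mul_of_nonneg_left hlog (le_of_lt hc)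
        _ = y / 2 := by field_simp
    linarith
  have h3 : Filter.Tendsto (fun n : ℕ => Real.log n) Filter.atTop Filter.atTop :=
    Real.tendsto_log_atTop.comp tendsto_natCast_atTop_atTop
  exact h3.eventually h1

end KP

set_option maxHeartbeats 4000000 in
theorem kappaMulti_upper_bound (lam : ℕ) (hlam : 2 ≤ lam) :
    ∃ C : ℝ, 0 < C ∧ ∃ N : ℕ, ∀ n : ℕ, N ≤ n →
      (kappaMulti n lam : ℝ) ≤ ((n+1).factorial : ℝ) / ((n : ℝ)^2 + 1) *
        (Real.log n + ((lam : ℝ) - 1) * Real.log (Real.log n) + C) := by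
  classical
  have hc : (0:ℝ) < (lam:ℝ) - 1 := by
    have : (2:ℝ) ≤ (lam:ℝ) := by exact_mod_cast hlam
    linarith
  obtain ⟨N₂, hN₂⟩ := Filter.eventually_atTop.1 (KP.ev_loglog ((lam:ℝ)-1) hc)
  refine ⟨3 + 2*(lam:ℝ)^2*4^(lam-1), by positivity, max (max 31 (8*lam)) N₂, fun n hn => ?_⟩
  have hn31 : 31 ≤ n := le_trans (le_trans (le_max_left _ _) (le_max_left _ _)) hn
  have hn8l : 8 * lam ≤ n := le_trans (le_trans (le_max_right _ _) (le_max_left _ _)) hn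
  have hE2 : ((lam:ℝ)-1) * Real.log (Real.log n) + 1 ≤ Real.log n :=
    hN₂ n (le_trans (le_max_right _ _) hn)
  -- notation
  set L : ℝ := Real.log n with hLdef
  set LL : ℝ := Real.log L with hLLdef
  set μ : ℝ := L + ((lam:ℝ)-1) * LL + 1 with hμdef
  set D : ℕ := n^2 + 1 with hDdef
  set NN : ℕ := (n+1).factorial with hNNdef
  set m : ℕ := ⌈(NN:ℝ) * μ / D⌉₊ with hmdef
  have hn0 : (0:ℝ) < n := by
    have : (31:ℝ) ≤ (n:ℝ) := by exact_mod_cast hn31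
    linarith
  have hfac : n ^ 5 ≤ (n+1).factorial := KP.fact5 n hn31
  have ha : 2 * lam * (n^2+1) ≤ NN := by
    rw [hNNdef]
    have h1 : 2 * lam * (n^2+1) ≤ 4 * lam * n^2 := by nlinarith
    have h2 : 4 * lam ≤ n := by omega
    have h3 : 4 * lam * n^2 ≤ n * n^2 := Nat.mul_le_mul_right _ h2
    have h4 : n * n^2 ≤ n^5 := by
      calc n * n^2 = n^3 := by ring
        _ ≤ n^5 := Nat.pow_le_pow_right (by omega) (by omega)
    omega
  have hDNN : D ≤ NN := by
    have h1 : n^2+1 ≤ 2*lam*(n^2+1) := Nat.le_mul_of_pos_left _ (by omega)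
    rw [hDdef]; exact le_trans h1 ha
  have hlamD : lam ≤ D := by rw [hDdef]; nlinarith
  have hWex : ∀ π : Equiv.Perm (Fin n),
      ∃ W ⊆ Finset.univ.filter (fun ρ => Covers ρ π), W.card = D :=
    fun π => Finset.exists_subset_card_eq (KP.card_covers_ge π)
  choose Wf hWsub hWcard using hWex
  have hPex : ∀ π : Equiv.Perm (Fin n), ∃ P ⊆ Wf π, P.card = lam :=
    fun π => Finset.exists_subset_card_eq (by rw [hWcard]; exact hlamD)
  choose Pf hPsub hPcard using hPex
  set BND : ℕ := ∑ j ∈ Finset.range lam, m.choose j * (D ^ j * (NN - D + j) ^ (m - j)) with hBND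
  have hcardG : Fintype.card (Equiv.Perm (Fin (n+1))) = NN := by
    rw [Fintype.card_perm, Fintype.card_fin, hNNdef]
  have hper : ∀ π : Equiv.Perm (Fin n),
      (Finset.univ.filter (fun t : Fin m → Equiv.Perm (Fin (n+1)) =>
        ((Finset.univ.image t) ∩ Wf π).card ≤ lam - 1)).card ≤ BND := by
    intro π
    have h := KP.count_bad_tuples (Wf π) m (lam - 1)
    rw [hWcard, hcardG] at h
    have hrange : lam - 1 + 1 = lam := by omega
    rw [hrange] at h
    exact h
  obtain ⟨t₀, ht₀u, hmin⟩ := Finset.exists_min_image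
    (Finset.univ : Finset (Fin m → Equiv.Perm (Fin (n+1))))
    (fun t => (Finset.univ.filter (fun π : Equiv.Perm (Fin n) =>
      ((Finset.univ.image t) ∩ Wf π).card ≤ lam - 1)).card) ⟨fun _ => 1, Finset.mem_univ _⟩
  set Bad := Finset.univ.filter (fun π : Equiv.Perm (Fin n) =>
      ((Finset.univ.image t₀) ∩ Wf π).card ≤ lam - 1) with hBad
  have hpig : Bad.card * NN ^ m ≤ n.factorial * BND := by
    have h1 : Bad.card * NN ^ m = ∑ _t : Fin m → Equiv.Perm (Fin (n+1)), Bad.card := by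
      rw [Finset.sum_const, Finset.card_univ, Fintype.card_fun, hcardG, Fintype.card_fin,
        smul_eq_mul, mul_comm]
    have h2 : ∑ _t : Fin m → Equiv.Perm (Fin (n+1)), Bad.card ≤
        ∑ t : Fin m → Equiv.Perm (Fin (n+1)),
          (Finset.univ.filter (fun π : Equiv.Perm (Fin n) =>
            ((Finset.univ.image t) ∩ Wf π).card ≤ lam - 1)).card :=
      Finset.sum_le_sum (fun t _ => hmin t (Finset.mem_univ t))
    have h3 : ∑ t : Fin m → Equiv.Perm (Fin (n+1)),
          (Finset.univ.filter (fun π : Equiv.Perm (Fin n) =>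
            ((Finset.univ.image t) ∩ Wf π).card ≤ lam - 1)).card
        = ∑ π : Equiv.Perm (Fin n),
          (Finset.univ.filter (fun t : Fin m → Equiv.Perm (Fin (n+1)) =>
            ((Finset.univ.image t) ∩ Wf π).card ≤ lam - 1)).card := by
      simp_rw [Finset.card_filter]
      rw [Finset.sum_comm]
    have h4 : ∑ π : Equiv.Perm (Fin n),
          (Finset.univ.filter (fun t : Fin m → Equiv.Perm (Fin (n+1)) =>
            ((Finset.univ.image t) ∩ Wf π).card ≤ lam - 1)).card ≤
        ∑ _π : Equiv.Perm (Fin n), BND := Finset.sum_le_sum (fun π _ => hper π)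
    have h5 : ∑ _π : Equiv.Perm (Fin n), BND = n.factorial * BND := by
      rw [Finset.sum_const, Finset.card_univ, Fintype.card_perm, Fintype.card_fin, smul_eq_mul]
    omega
  -- the covering family
  set A := (Finset.univ.image t₀) ∪ Bad.biUnion Pf with hA
  have hAcard : A.card ≤ m + lam * Bad.card := by
    refine le_trans (Finset.card_union_le _ _) ?_
    have h1 : (Finset.univ.image t₀).card ≤ m := by
      refine le_trans (Finset.card_image_le) ?_
      rw [Finset.card_univ, Fintype.card_fin]
    have h2 : (Bad.biUnion Pf).card ≤ lam * Bad.card := by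
      refine le_trans (Finset.card_biUnion_le) ?_
      rw [Finset.sum_congr rfl (fun π _ => hPcard π), Finset.sum_const, smul_eq_mul, mul_comm]
    omega
  have hAcover : ∀ π : Equiv.Perm (Fin n),
      lam ≤ (A.filter (fun ρ => Covers ρ π)).card := by
    intro π
    by_cases hb : π ∈ Bad
    · have hsub2 : Pf π ⊆ A.filter (fun ρ => Covers ρ π) := by
        intro ρ hρ
        rw [Finset.mem_filter]
        constructor
        · rw [hA]
          exact Finset.mem_union_right _ (Finset.mem_biUnion.2 ⟨π, hb, hρ⟩)
        · have := hWsub π (hPsub π hρ)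
          exact (Finset.mem_filter.1 this).2
      calc lam = (Pf π).card := (hPcard π).symm
        _ ≤ _ := Finset.card_le_card hsub2
    · rw [hBad, Finset.mem_filter] at hb
      push_neg at hb
      have hb2 : lam ≤ ((Finset.univ.image t₀) ∩ Wf π).card := by
        have := hb (Finset.mem_univ π)
        omega
      refine le_trans hb2 (Finset.card_le_card ?_)
      intro ρ hρ
      rw [Finset.mem_inter] at hρ
      rw [Finset.mem_filter]
      constructor
      · rw [hA]; exact Finset.mem_union_left _ hρ.1
      · exact (Finset.mem_filter.1 (hWsub π hρ.2)).2
  have hkap : kappaMulti n lam ≤ m + lam * Bad.card := by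
    refine le_trans (Nat.sInf_le ⟨A, rfl, fun π => ?_⟩) hAcard
    have hset : {ρ ∈ (A : Set (Equiv.Perm (Fin (n+1)))) | Covers ρ π}
        = ((A.filter (fun ρ => Covers ρ π)) : Finset (Equiv.Perm (Fin (n+1)))) := by
      ext ρ; simp
    rw [hset, Set.ncard_coe_finset]
    exact hAcover π
  -- ====== real analysis part ======
  have hD0 : (0:ℝ) < (D:ℝ) := by rw [hDdef]; push_cast; positivity
  have hDcast : (D:ℝ) = (n:ℝ)^2+1 := by rw [hDdef]; push_cast; ring
  have hNN0 : (0:ℝ) < (NN:ℝ) := by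
    rw [hNNdef]; exact_mod_cast Nat.factorial_pos (n+1)
  have hL1 : (1:ℝ) ≤ L := by
    rw [hLdef, Real.le_log_iff_exp_le hn0]
    calc Real.exp 1 ≤ 2.7182818286 := le_of_lt Real.exp_one_lt_d9
      _ ≤ 31 := by norm_num
      _ ≤ (n:ℝ) := by exact_mod_cast hn31
  have hL0 : (0:ℝ) < L := lt_of_lt_of_le one_pos hL1
  have hLL0 : (0:ℝ) ≤ LL := Real.log_nonneg hL1
  have hlamR : (2:ℝ) ≤ (lam:ℝ) := by exact_mod_cast hlam
  have hμ1 : (1:ℝ) ≤ μ := by rw [hμdef]; nlinarith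
  have hμ2L : μ ≤ 2 * L := by rw [hμdef]; linarith [hE2]
  have hm_lb : (NN:ℝ) * μ / D ≤ (m:ℝ) := Nat.le_ceil _
  have hm_ub : (m:ℝ) ≤ (NN:ℝ) * μ / D + 1 := le_of_lt (Nat.ceil_lt_add_one (by positivity))
  have hDm : (NN:ℝ) * μ ≤ (D:ℝ) * m := by
    rw [div_le_iff₀ hD0] at hm_lb; linarith [hm_lb]
  have hDle : (D:ℝ) ≤ (NN:ℝ) := by exact_mod_cast hDNN
  have hmDle : (m:ℝ) * D ≤ (NN:ℝ)*μ + D := by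
    have h := mul_le_mul_of_nonneg_right hm_ub (le_of_lt hD0)
    rw [add_mul, div_mul_cancel₀ _ (ne_of_gt hD0)] at h
    linarith
  have hmD : (m:ℝ) * D ≤ 2*μ*(NN:ℝ) := by nlinarith
  have haR : 2*(lam:ℝ)*((n:ℝ)^2+1) ≤ (NN:ℝ) := by
    have := (Nat.cast_le (α := ℝ)).2 ha
    push_cast at this
    linarith
  have hf3 : 2*(lam:ℝ)*(D:ℝ) ≤ (NN:ℝ) := by rw [hDcast]; exact haR
  have hmlam : lam ≤ m := by
    have h1 : (lam:ℝ) * D ≤ (NN:ℝ) * μ := by nlinarith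
    have h2 : (lam:ℝ) ≤ (NN:ℝ)*μ/D := (le_div_iff₀ hD0).2 h1
    have : (lam:ℝ) ≤ (m:ℝ) := le_trans h2 hm_lb
    exact_mod_cast this
  have hD2 : (2:ℝ) ≤ (D:ℝ) := by
    rw [hDcast]
    have h1n : (1:ℝ) ≤ (n:ℝ) := by exact_mod_cast (by omega : 1 ≤ n)
    nlinarith
  have hE3 : (lam:ℝ) * ((m:ℝ) + D) ≤ (NN:ℝ) := by
    have hLn : L ≤ (n:ℝ) := Real.log_le_self (le_of_lt hn0)
    have h8n : (8:ℝ)*(lam:ℝ) ≤ (n:ℝ) := by exact_mod_cast hn8l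
    have hlmu : (lam:ℝ)*μ ≤ (D:ℝ)/4 := by
      rw [hDcast]; nlinarith
    have hlm1D : (lam:ℝ)*(1+(D:ℝ)) ≤ (3/4)*(NN:ℝ) := by nlinarith
    have key : (lam:ℝ) * ((m:ℝ) + D) * D ≤ (NN:ℝ) * D := by
      have k1 := mul_le_mul_of_nonneg_left hmDle (by linarith : (0:ℝ) ≤ (lam:ℝ))
      have k2 := mul_le_mul_of_nonneg_right hlm1D (le_of_lt hD0)
      have k3 := mul_le_mul_of_nonneg_right hlmu (le_of_lt hNN0)
      generalize hd1 : (D:ℝ) = d at k1 k2 k3 ⊢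
      generalize hd2 : (NN:ℝ) = nn at k1 k2 k3 ⊢
      generalize hd3 : (m:ℝ) = mm at k1 k2 k3 ⊢
      generalize hd4 : μ = u at k1 k2 k3 ⊢
      linarith [k1, k2, k3]
    exact le_of_mul_le_mul_right (by linarith [key]) hD0
  have hμ2pos : (1:ℝ) ≤ 2*μ := by linarith
  have hterm : ∀ j ∈ Finset.range lam,
      ((m.choose j * (D ^ j * (NN - D + j) ^ (m - j)) : ℕ) : ℝ) ≤
      (NN:ℝ)^m * ((2*μ)^(lam-1) * Real.exp (1 - μ)) := by
    intro j hjr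
    rw [Finset.mem_range] at hjr
    have hjlam : (j:ℝ) ≤ (lam:ℝ) - 1 := by
      have h1 : (j:ℝ) + 1 ≤ (lam:ℝ) := by exact_mod_cast hjr
      linarith
    have hj0 : (0:ℝ) ≤ (j:ℝ) := Nat.cast_nonneg j
    have hjm : j ≤ m := le_trans (by omega) hmlam
    have hcast1 : ((NN - D + j : ℕ):ℝ) = (NN:ℝ) - D + j := by
      push_cast [Nat.cast_sub hDNN]; ring
    have hbase0 : (0:ℝ) ≤ (NN:ℝ) - D + j := by linarith
    rw [Nat.cast_mul, Nat.cast_mul, Nat.cast_pow, Nat.cast_pow, hcast1]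
    have hchoose : ((m.choose j : ℕ):ℝ) ≤ (m:ℝ)^j := by
      exact_mod_cast Nat.choose_le_pow m j
    have hc2 : (m:ℝ)^j * (D:ℝ)^j ≤ ((2*μ)*(NN:ℝ))^j := by
      rw [← mul_pow]
      exact pow_le_pow_left₀ (by positivity) (by nlinarith) j
    have hbase : (NN:ℝ) - D + j ≤ (NN:ℝ) * Real.exp (-(((D:ℝ)-j)/NN)) := by
      have h1 : -(((D:ℝ)-j)/NN) + 1 ≤ Real.exp (-(((D:ℝ)-j)/NN)) := Real.add_one_le_exp _
      have h2 : (NN:ℝ) - D + j = (NN:ℝ) * (1 - ((D:ℝ)-j)/NN) := by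
        field_simp
        ring
      rw [h2]
      exact mul_le_mul_of_nonneg_left (by linarith) (le_of_lt hNN0)
    have hc3 : ((NN:ℝ) - D + j)^(m-j) ≤ (NN:ℝ)^(m-j) * Real.exp (-(((D:ℝ)-j)/NN))^(m-j) := by
      rw [← mul_pow]
      exact pow_le_pow_left₀ hbase0 hbase (m-j)
    have hkey : (μ - 1)*(NN:ℝ) ≤ ((m:ℝ)-j)*((D:ℝ)-j) := by
      have k1 := mul_le_mul_of_nonneg_right hjlam (le_of_lt (lt_of_lt_of_le ?mpos (le_refl (m:ℝ))))
      case mpos => positivity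
      have k2 := mul_le_mul_of_nonneg_right hjlam (le_of_lt hD0)
      nlinarith [sq_nonneg (j:ℝ)]
    have hc4 : Real.exp (-(((D:ℝ)-j)/NN))^(m-j) ≤ Real.exp (1-μ) := by
      rw [← Real.exp_nat_mul]
      apply Real.exp_le_exp.2
      have hmj : ((m - j : ℕ):ℝ) = (m:ℝ) - j := by
        push_cast [Nat.cast_sub hjm]; ring
      rw [hmj]
      have h5 : μ - 1 ≤ ((m:ℝ)-j)*((D:ℝ)-j)/NN := by
        rw [le_div_iff₀ hNN0]; linarith
      have h6 : ((m:ℝ)-j) * (-(((D:ℝ)-j)/NN)) = -(((m:ℝ)-j)*((D:ℝ)-j)/NN) := by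
        ring
      rw [h6]; linarith
    have hNNj : (0:ℝ) ≤ (NN:ℝ)^(m-j) := by positivity
    calc ((m.choose j : ℕ):ℝ) * ((D:ℝ)^j * ((NN:ℝ) - D + j)^(m-j))
        ≤ (m:ℝ)^j * ((D:ℝ)^j * ((NN:ℝ)^(m-j) * Real.exp (1-μ))) := by
          have b1 : ((NN:ℝ) - D + j)^(m-j) ≤ (NN:ℝ)^(m-j) * Real.exp (1-μ) := by
            refine le_trans hc3 ?_
            exact mul_le_mul_of_nonneg_left hc4 hNNj
          have b2 : (D:ℝ)^j * ((NN:ℝ) - D + j)^(m-j) ≤ (D:ℝ)^j * ((NN:ℝ)^(m-j) * Real.exp (1-μ)) :=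
            mul_le_mul_of_nonneg_left b1 (by positivity)
          exact mul_le_mul hchoose b2 (by positivity) (by positivity)
      _ = ((m:ℝ)^j * (D:ℝ)^j) * ((NN:ℝ)^(m-j) * Real.exp (1-μ)) := by ring
      _ ≤ ((2*μ)*(NN:ℝ))^j * ((NN:ℝ)^(m-j) * Real.exp (1-μ)) := by
          exact mul_le_mul_of_nonneg_right hc2 (by positivity)
      _ = (NN:ℝ)^j * (NN:ℝ)^(m-j) * ((2*μ)^j * Real.exp (1-μ)) := by
          rw [mul_pow]; ring
      _ = (NN:ℝ)^m * ((2*μ)^j * Real.exp (1-μ)) := by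
          rw [← pow_add]
          congr 2
          omega
      _ ≤ (NN:ℝ)^m * ((2*μ)^(lam-1) * Real.exp (1-μ)) := by
          have : (2*μ)^j ≤ (2*μ)^(lam-1) := pow_le_pow_right₀ hμ2pos (by omega)
          have e0 : (0:ℝ) ≤ Real.exp (1-μ) := le_of_lt (Real.exp_pos _)
          have := mul_le_mul_of_nonneg_right this e0
          exact mul_le_mul_of_nonneg_left this (by positivity)
  have hNNm0 : (0:ℝ) < (NN:ℝ)^m := by positivity
  have hsumB : (BND:ℝ) ≤ (lam:ℝ) * ((NN:ℝ)^m * ((2*μ)^(lam-1) * Real.exp (1-μ))) := by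
    rw [hBND, Nat.cast_sum]
    calc ∑ j ∈ Finset.range lam, ((m.choose j * (D ^ j * (NN - D + j) ^ (m - j)) : ℕ) : ℝ)
        ≤ ∑ _j ∈ Finset.range lam, (NN:ℝ)^m * ((2*μ)^(lam-1) * Real.exp (1-μ)) :=
          Finset.sum_le_sum hterm
      _ = (lam:ℝ) * ((NN:ℝ)^m * ((2*μ)^(lam-1) * Real.exp (1-μ))) := by
          rw [Finset.sum_const, Finset.card_range, nsmul_eq_mul]
  have hBc : (Bad.card:ℝ) ≤ (n.factorial:ℝ) * ((lam:ℝ) * ((2*μ)^(lam-1) * Real.exp (1-μ))) := by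
    have h := (Nat.cast_le (α := ℝ)).2 hpig
    push_cast at h
    have h2 : (Bad.card:ℝ) * (NN:ℝ)^m ≤
        ((n.factorial:ℝ) * ((lam:ℝ) * ((2*μ)^(lam-1) * Real.exp (1-μ)))) * (NN:ℝ)^m := by
      calc (Bad.card:ℝ) * (NN:ℝ)^m ≤ (n.factorial:ℝ) * (BND:ℝ) := h
        _ ≤ (n.factorial:ℝ) * ((lam:ℝ) * ((NN:ℝ)^m * ((2*μ)^(lam-1) * Real.exp (1-μ)))) :=
            mul_le_mul_of_nonneg_left hsumB (by positivity)
        _ = ((n.factorial:ℝ) * ((lam:ℝ) * ((2*μ)^(lam-1) * Real.exp (1-μ)))) * (NN:ℝ)^m := by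
            ring
    exact le_of_mul_le_mul_right h2 hNNm0
  have hexp : Real.exp (1 - μ) = 1/((n:ℝ) * L^(lam-1)) := by
    have hlam1 : ((lam - 1 : ℕ):ℝ) = (lam:ℝ) - 1 := by
      push_cast [Nat.cast_sub (by omega : 1 ≤ lam)]; ring
    have h1 : 1 - μ = -L + -(((lam-1:ℕ):ℝ) * LL) := by
      rw [hμdef, hlam1]; ring
    have h2 : Real.exp L = (n:ℝ) := by rw [hLdef]; exact Real.exp_log hn0
    have h3 : Real.exp LL = L := by rw [hLLdef]; exact Real.exp_log hL0
    rw [h1, Real.exp_add, Real.exp_neg, Real.exp_neg, Real.exp_nat_mul, h2, h3, one_div, mul_inv]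
  have hE4 : (2*μ)^(lam-1) * Real.exp (1-μ) ≤ 4^(lam-1) / (n:ℝ) := by
    rw [hexp]
    have h1 : (2*μ)^(lam-1) ≤ (4*L)^(lam-1) :=
      pow_le_pow_left₀ (by positivity) (by linarith) _
    have hLpow : (0:ℝ) < L^(lam-1) := by positivity
    calc (2*μ)^(lam-1) * (1/((n:ℝ)*L^(lam-1)))
        ≤ (4*L)^(lam-1) * (1/((n:ℝ)*L^(lam-1))) := by
          exact mul_le_mul_of_nonneg_right h1 (by positivity)
      _ = 4^(lam-1)/(n:ℝ) := by
          rw [mul_pow]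
          field_simp
  have hBc2 : (Bad.card:ℝ) ≤ (n.factorial:ℝ) * (lam:ℝ) * 4^(lam-1) / (n:ℝ) := by
    calc (Bad.card:ℝ) ≤ (n.factorial:ℝ) * ((lam:ℝ) * ((2*μ)^(lam-1) * Real.exp (1-μ))) := hBc
      _ ≤ (n.factorial:ℝ) * ((lam:ℝ) * (4^(lam-1)/(n:ℝ))) := by
          refine mul_le_mul_of_nonneg_left ?_ (by positivity)
          exact mul_le_mul_of_nonneg_left hE4 (by positivity)
      _ = (n.factorial:ℝ) * (lam:ℝ) * 4^(lam-1) / (n:ℝ) := by ring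
  -- ====== final assembly ======
  have hND2 : (n.factorial:ℝ)/(2*(n:ℝ)) ≤ (NN:ℝ)/(D:ℝ) := by
    rw [div_le_div_iff₀ (by positivity) hD0]
    have hnat : n.factorial * (n^2+1) ≤ (n+1).factorial * (2*n) := by
      have h1 : n^2+1 ≤ 2*n*(n+1) := by nlinarith
      calc n.factorial * (n^2+1) ≤ n.factorial * (2*n*(n+1)) := Nat.mul_le_mul_left _ h1
        _ = (n+1).factorial * (2*n) := by
            rw [Nat.factorial_succ]; ring
    have := (Nat.cast_le (α := ℝ)).2 hnat
    push_cast at this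
    rw [hDcast, hNNdef]
    push_cast
    linarith
  have hf1 : (1:ℝ) ≤ (n.factorial:ℝ)/(n:ℝ) := by
    rw [le_div_iff₀ hn0, one_mul]
    exact_mod_cast Nat.self_le_factorial n
  have hkapR : (kappaMulti n lam : ℝ) ≤ (m:ℝ) + (lam:ℝ) * (Bad.card:ℝ) := by
    have := (Nat.cast_le (α := ℝ)).2 hkap
    push_cast at this
    linarith
  have hgoal_eq : ((n+1).factorial : ℝ) / ((n : ℝ)^2 + 1) *
      (Real.log n + ((lam : ℝ) - 1) * Real.log (Real.log n) + (3 + 2*(lam:ℝ)^2*4^(lam-1)))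
      = (NN:ℝ)/(D:ℝ)*μ + (NN:ℝ)/(D:ℝ)*(2 + 2*(lam:ℝ)^2*4^(lam-1)) := by
    rw [hμdef, hLLdef, hLdef, hDcast, hNNdef]
    ring
  rw [hgoal_eq]
  have hm2 : (m:ℝ) ≤ (NN:ℝ)/(D:ℝ)*μ + 1 := by
    have : (NN:ℝ)*μ/D = (NN:ℝ)/(D:ℝ)*μ := by ring
    linarith [hm_ub, le_of_eq this]
  have hlast : 1 + (lam:ℝ) * ((n.factorial:ℝ) * (lam:ℝ) * 4^(lam-1) / (n:ℝ))
      ≤ (NN:ℝ)/(D:ℝ)*(2 + 2*(lam:ℝ)^2*4^(lam-1)) := by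
    have hpow0 : (0:ℝ) < (4:ℝ)^(lam-1) := by positivity
    have k1 := mul_le_mul_of_nonneg_right hND2 (by positivity : (0:ℝ) ≤ 2 + 2*(lam:ℝ)^2*4^(lam-1))
    have k2 : (n.factorial:ℝ)/(2*(n:ℝ)) * (2 + 2*(lam:ℝ)^2*4^(lam-1))
        = (n.factorial:ℝ)/(n:ℝ) + (lam:ℝ)^2*4^(lam-1) * ((n.factorial:ℝ)/(n:ℝ)) := by
      field_simp
    have k3 : (lam:ℝ) * ((n.factorial:ℝ) * (lam:ℝ) * 4^(lam-1) / (n:ℝ))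
        = (lam:ℝ)^2*4^(lam-1) * ((n.factorial:ℝ)/(n:ℝ)) := by
      field_simp
    rw [k3]
    linarith [k1, k2, hf1]
  have hB3 : (lam:ℝ) * (Bad.card:ℝ) ≤ (lam:ℝ) * ((n.factorial:ℝ) * (lam:ℝ) * 4^(lam-1) / (n:ℝ)) :=
    mul_le_mul_of_nonneg_left hBc2 (by positivity)
  linarith
end

section
/- For every n ≥ 1 and every π ∈ S_n, the set J_π := { π' ∈ S_n : there exists ρ ∈ S_{n+1} that covers both π and π' } has cardinality at most n³. -/
open Fin Set

section Aux

/-- Two permutations with the same comparison pattern are equal. -/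
lemma perm_eq_of_pattern_eq {n : ℕ} (π₁ π₂ : Equiv.Perm (Fin n))
    (h : ∀ i j, π₁ i < π₁ j ↔ π₂ i < π₂ j) : π₁ = π₂ := by
  haveI : WellFoundedLT (Fin n) := inferInstance
  have hφ : StrictMono (fun x : Fin n => π₂ (π₁.symm x)) := by
    intro x y hxy
    exact (h (π₁.symm x) (π₁.symm y)).mp (by simpa using hxy)
  have hr : Set.range (fun x : Fin n => π₂ (π₁.symm x)) = Set.range (id : Fin n → Fin n) := by
    have hs : Function.Surjective (fun x : Fin n => π₂ (π₁.symm x)) :=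
      π₂.surjective.comp π₁.symm.surjective
    rw [hs.range_eq, Set.range_id]
  have heq : (fun x : Fin n => π₂ (π₁.symm x)) = (id : Fin n → Fin n) :=
    (StrictMono.range_inj hφ strictMono_id).mp hr
  refine Equiv.ext fun i => ?_
  have h2 := congrFun heq (π₁ i)
  simp only [Equiv.symm_apply_apply, id_eq] at h2
  exact h2.symm

/-- Two permutations agreeing at `e` and with the same comparison pattern away from `e`
are equal. -/
lemma perm_eq_of_pattern_eq_away {m : ℕ} (π₁ π₂ : Equiv.Perm (Fin (m+1))) (e : Fin (m+1))
    (he : π₁ e = π₂ e)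
    (h : ∀ k l, k ≠ e → l ≠ e → (π₁ k < π₁ l ↔ π₂ k < π₂ l)) : π₁ = π₂ := by
  haveI : WellFoundedLT (Fin m) := inferInstance
  set u : Fin m → Fin (m+1) := fun i => π₁ (e.succAbove i) with hu
  set v : Fin m → Fin (m+1) := fun i => π₂ (e.succAbove i) with hv
  have huv : ∀ i j, u i < u j ↔ v i < v j := fun i j =>
    h _ _ (Fin.succAbove_ne e i) (Fin.succAbove_ne e j)
  set s := Tuple.sort u with hs
  have hinj_u : Function.Injective u :=
    π₁.injective.comp (Fin.succAbove_right_injective)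
  have hus : StrictMono (u ∘ s) :=
    (Tuple.monotone_sort u).strictMono_of_injective (hinj_u.comp s.injective)
  have hvs : StrictMono (v ∘ s) := by
    intro i j hij
    exact (huv _ _).mp (hus hij)
  have hrange : ∀ (π : Equiv.Perm (Fin (m+1))),
      Set.range (fun i : Fin m => π (e.succAbove i)) = {π e}ᶜ := by
    intro π
    have : (fun i : Fin m => π (e.succAbove i)) = π ∘ e.succAbove := rfl
    rw [this, Set.range_comp, Fin.range_succAbove,
      ← Set.image_singleton, ← Set.image_compl_eq π.bijective]
  have hru : Set.range (u ∘ s) = {π₁ e}ᶜ := by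
    rw [Set.range_comp, s.surjective.range_eq, Set.image_univ, hu, hrange]
  have hrv : Set.range (v ∘ s) = {π₁ e}ᶜ := by
    rw [Set.range_comp, s.surjective.range_eq, Set.image_univ, hv, hrange, he]
  have heq : u ∘ s = v ∘ s := (StrictMono.range_inj hus hvs).mp (hru.trans hrv.symm)
  have huv' : u = v := by
    funext i
    have := congrFun heq (s.symm i)
    simpa using this
  refine Equiv.ext fun x => ?_
  rcases eq_or_ne x e with rfl | hx
  · exact he
  · obtain ⟨i, rfl⟩ := Fin.exists_succAbove_eq hx
    exact congrFun huv' i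

/-- Every strictly monotone map `Fin (m+1) → Fin (m+2)` is `succAbove a` for some `a`. -/
lemma strictMono_eq_succAbove {m : ℕ} (f : Fin (m+1) → Fin (m+2)) (hf : StrictMono f) :
    ∃ a : Fin (m+2), f = a.succAbove := by
  haveI : WellFoundedLT (Fin (m+1)) := inferInstance
  have hnsurj : ¬ Function.Surjective f := by
    intro hsurj
    have := Fintype.card_le_of_surjective f hsurj
    simp at this
  obtain ⟨a, ha⟩ := not_forall.mp hnsurj
  push_neg at ha
  have hsub : Set.range f ⊆ {a}ᶜ := by
    intro x hx
    obtain ⟨i, rfl⟩ := hx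
    simpa using fun hcontra => ha i hcontra
  have hcardr : (Set.range f).ncard = m + 1 := by
    rw [← Set.image_univ, Set.ncard_image_of_injective _ hf.injective, Set.ncard_univ,
      Nat.card_eq_fintype_card, Fintype.card_fin]
  have hcardc : ({a}ᶜ : Set (Fin (m+2))).ncard = m + 1 := by
    have h1 := Set.ncard_add_ncard_compl ({a} : Set (Fin (m+2)))
    rw [Set.ncard_singleton, Nat.card_eq_fintype_card, Fintype.card_fin] at h1
    omega
  have hreq : Set.range f = ({a}ᶜ : Set (Fin (m+2))) :=
    Set.eq_of_subset_of_ncard_le hsub (by rw [hcardr, hcardc]) (Set.toFinite _)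
  refine ⟨a, (StrictMono.range_inj hf (Fin.strictMono_succAbove a)).mp ?_⟩
  rw [hreq, Fin.range_succAbove]

variable {m : ℕ} (π : Equiv.Perm (Fin (m+1)))

/-- The reconstruction predicate: `π'` arises from `π` by deleting position `d`
and inserting (at a place recorded by `e`, with value ranked `r`). -/
def ReconP (d e r : Fin (m+1)) (π' : Equiv.Perm (Fin (m+1))) : Prop :=
  ∃ (ρ : Equiv.Perm (Fin (m+2))) (a b : Fin (m+2)),
    a.succAbove d = b ∧ b.succAbove e = a ∧ π' e = r ∧
    (∀ i j, π i < π j ↔ ρ (a.succAbove i) < ρ (a.succAbove j)) ∧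
    (∀ i j, π' i < π' j ↔ ρ (b.succAbove i) < ρ (b.succAbove j))

lemma ReconP_mu {d e r : Fin (m+1)} {π' : Equiv.Perm (Fin (m+1))}
    (hP : ReconP π d e r π') :
    ∃ μ : Fin m → Fin (m+1), StrictMono μ ∧ Set.range μ = {d}ᶜ ∧
      (∀ i j : Fin m, π' (e.succAbove i) < π' (e.succAbove j) ↔ π (μ i) < π (μ j)) := by
  obtain ⟨ρ, a, b, hd, he, hr, hπ, hπ'⟩ := hP
  have hne : ∀ i : Fin m, b.succAbove (e.succAbove i) ≠ a := by
    intro i hcontra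
    rw [← he] at hcontra
    exact Fin.succAbove_ne e i (Fin.succAbove_right_injective hcontra)
  choose μ hμ using fun i => Fin.exists_succAbove_eq (hne i)
  -- hμ : ∀ i, a.succAbove (μ i) = b.succAbove (e.succAbove i)
  have hmono : StrictMono μ := by
    intro i j hij
    have : a.succAbove (μ i) < a.succAbove (μ j) := by
      rw [hμ, hμ]
      exact Fin.strictMono_succAbove b (Fin.strictMono_succAbove e hij)
    exact (Fin.strictMono_succAbove a).lt_iff_lt.mp this
  refine ⟨μ, hmono, ?_, ?_⟩
  · ext j
    simp only [Set.mem_range, Set.mem_compl_iff, Set.mem_singleton_iff]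
    constructor
    · rintro ⟨i, rfl⟩ hcontra
      have : a.succAbove d = b.succAbove (e.succAbove i) := by rw [← hcontra, hμ]
      rw [hd] at this
      exact Fin.succAbove_ne b (e.succAbove i) this.symm
    · intro hj
      have h1 : a.succAbove j ≠ b := by
        intro hcontra
        exact hj (Fin.succAbove_right_injective (hcontra.trans hd.symm))
      obtain ⟨k, hk⟩ := Fin.exists_succAbove_eq h1
      have hk_ne : k ≠ e := by
        rintro rfl
        rw [he] at hk
        exact Fin.ne_succAbove a j hk
      obtain ⟨i, rfl⟩ := Fin.exists_succAbove_eq hk_ne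
      refine ⟨i, Fin.succAbove_right_injective (p := a) ?_⟩
      rw [hμ, hk]
  · intro i j
    rw [hπ' _ _, ← hμ, ← hμ, ← hπ _ _]

lemma ReconP_unique {d e r : Fin (m+1)} {π₁ π₂ : Equiv.Perm (Fin (m+1))}
    (h1 : ReconP π d e r π₁) (h2 : ReconP π d e r π₂) : π₁ = π₂ := by
  haveI : WellFoundedLT (Fin m) := inferInstance
  obtain ⟨μ₁, hm1, hr1, hc1⟩ := ReconP_mu π h1
  obtain ⟨μ₂, hm2, hr2, hc2⟩ := ReconP_mu π h2
  have hμ : μ₁ = μ₂ := (StrictMono.range_inj hm1 hm2).mp (hr1.trans hr2.symm)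
  obtain ⟨_, _, _, _, _, he1, _, _⟩ := h1
  obtain ⟨_, _, _, _, _, he2, _, _⟩ := h2
  refine perm_eq_of_pattern_eq_away π₁ π₂ e (he1.trans he2.symm) ?_
  intro k l hk hl
  obtain ⟨i, rfl⟩ := Fin.exists_succAbove_eq hk
  obtain ⟨j, rfl⟩ := Fin.exists_succAbove_eq hl
  rw [hc1 i j, hμ, ← hc2 i j]

lemma exists_ReconP_self : ∃ d e r : Fin (m+1), ReconP π d e r π := by
  classical
  set k : Fin (m+1) := π.symm (Fin.last m) with hkdef
  have hπk : π k = Fin.last m := π.apply_symm_apply _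
  set h : Fin (m+2) → Fin (m+2) :=
    (k.succ).insertNth (Fin.last (m+1)) (fun i => (π i).castSucc) with hh
  have happ1 : ∀ i, h (k.succ.succAbove i) = (π i).castSucc := fun i =>
    Fin.insertNth_apply_succAbove k.succ _ _ i
  have happ0 : h k.succ = Fin.last (m+1) :=
    Fin.insertNth_apply_same k.succ _ _
  have hinj : Function.Injective h := by
    intro x y hxy
    rcases eq_or_ne x k.succ with rfl | hx
    · rcases eq_or_ne y k.succ with rfl | hy
      · rfl
      · obtain ⟨j, rfl⟩ := Fin.exists_succAbove_eq hy
        rw [happ0, happ1] at hxy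
        exact absurd hxy.symm (Fin.ne_of_lt (Fin.castSucc_lt_last _))
    · obtain ⟨i, rfl⟩ := Fin.exists_succAbove_eq hx
      rcases eq_or_ne y k.succ with rfl | hy
      · rw [happ0, happ1] at hxy
        exact absurd hxy (Fin.ne_of_lt (Fin.castSucc_lt_last _))
      · obtain ⟨j, rfl⟩ := Fin.exists_succAbove_eq hy
        rw [happ1, happ1] at hxy
        congr 1
        exact π.injective (Fin.castSucc_injective _ hxy)
  set ρ : Equiv.Perm (Fin (m+2)) :=
    Equiv.ofBijective h ((Finite.injective_iff_bijective).mp hinj) with hρ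
  have hρapp : ∀ x, ρ x = h x := fun x => rfl
  have hab : (k.succ).succAbove k = k.castSucc :=
    Fin.succAbove_of_castSucc_lt _ _ (Fin.castSucc_lt_succ (i := k))
  have hba : (k.castSucc).succAbove k = k.succ :=
    Fin.succAbove_of_le_castSucc _ _ le_rfl
  -- for i ≠ k, castSucc k |> succAbove agrees with succ k |> succAbove
  have hagree : ∀ i : Fin (m+1), i ≠ k →
      (k.castSucc).succAbove i = (k.succ).succAbove i := by
    intro i hi
    rcases lt_or_gt_of_ne hi with hlt | hgt
    · rw [Fin.succAbove_of_castSucc_lt _ _ (Fin.castSucc_lt_castSucc_iff.mpr hlt),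
        Fin.succAbove_of_castSucc_lt _ _ (Fin.castSucc_lt_succ_iff.mpr hlt.le)]
    · rw [Fin.succAbove_of_le_castSucc _ _ (Fin.castSucc_le_castSucc_iff.mpr hgt.le),
        Fin.succAbove_of_le_castSucc _ _ (Fin.succ_le_castSucc_iff.mpr hgt)]
  refine ⟨k, k, Fin.last m, ρ, k.succ, k.castSucc, hab, hba, hπk, ?_, ?_⟩
  · intro i j
    rw [hρapp, hρapp, happ1, happ1, Fin.castSucc_lt_castSucc_iff]
  · intro i j
    rcases eq_or_ne i k with rfl | hi <;> rcases eq_or_ne j k with rfl | hj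
    · simp
    · rw [hπk, hba, hagree j hj, hρapp, hρapp, happ0, happ1]
      exact iff_of_false (Fin.not_lt.mpr (Fin.le_last _)) (Fin.not_lt.mpr (Fin.le_last _))
    · rw [hπk, hba, hagree i hi, hρapp, hρapp, happ0, happ1]
      constructor
      · intro _; exact Fin.castSucc_lt_last _
      · intro _
        refine Fin.lt_last_iff_ne_last.mpr ?_
        intro hcontra
        exact hi (π.injective (hcontra.trans hπk.symm))
    · rw [hagree i hi, hagree j hj, hρapp, hρapp, happ1, happ1,
        Fin.castSucc_lt_castSucc_iff]

end Aux

theorem jointly_coverable_bound (n : ℕ) (hn : 1 ≤ n) (π : Equiv.Perm (Fin n)) :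
    Set.ncard {π' : Equiv.Perm (Fin n) |
      ∃ ρ : Equiv.Perm (Fin (n+1)), Covers ρ π ∧ Covers ρ π'} ≤ n ^ 3 := by
  classical
  obtain ⟨m, rfl⟩ : ∃ m, n = m + 1 := ⟨n - 1, (Nat.succ_pred_eq_of_pos hn).symm⟩
  set J := {π' : Equiv.Perm (Fin (m+1)) |
      ∃ ρ : Equiv.Perm (Fin (m+1+1)), Covers ρ π ∧ Covers ρ π'} with hJ
  have key : ∀ π' ∈ J, ∃ x : Fin (m+1) × Fin (m+1) × Fin (m+1),
      ReconP π x.1 x.2.1 x.2.2 π' := by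
    rintro π' ⟨ρ, ⟨f, hf, hfp⟩, ⟨g, hg, hgp⟩⟩
    obtain ⟨a, rfl⟩ := strictMono_eq_succAbove f hf
    obtain ⟨b, rfl⟩ := strictMono_eq_succAbove g hg
    rcases eq_or_ne a b with rfl | hab
    · have hππ' : π' = π :=
        (perm_eq_of_pattern_eq π π' (fun i j => (hfp i j).trans (hgp i j).symm)).symm
      subst hππ'
      obtain ⟨d, e, r, hP⟩ := exists_ReconP_self π'
      exact ⟨(d, e, r), hP⟩
    · obtain ⟨d, hd⟩ := Fin.exists_succAbove_eq (Ne.symm hab)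
      obtain ⟨e, he⟩ := Fin.exists_succAbove_eq hab
      exact ⟨(d, e, π' e), ρ, a, b, hd, he, rfl, hfp, hgp⟩
  let F : Fin (m+1) × Fin (m+1) × Fin (m+1) → Equiv.Perm (Fin (m+1)) :=
    fun x => if h : ∃ π', ReconP π x.1 x.2.1 x.2.2 π' then h.choose else π
  have hsub : J ⊆ Set.range F := by
    intro π' hπ'
    obtain ⟨x, hx⟩ := key π' hπ'
    have hne : ∃ π'', ReconP π x.1 x.2.1 x.2.2 π'' := ⟨π', hx⟩
    refine ⟨x, ?_⟩
    simp only [F, dif_pos hne]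
    exact ReconP_unique π hne.choose_spec hx
  calc J.ncard ≤ (Set.range F).ncard :=
        Set.ncard_le_ncard hsub (Set.finite_range F)
    _ = (F '' Set.univ).ncard := by rw [Set.image_univ]
    _ ≤ (Set.univ : Set (Fin (m+1) × Fin (m+1) × Fin (m+1))).ncard :=
        Set.ncard_image_le Set.finite_univ
    _ = (m+1)^3 := by
        rw [Set.ncard_univ, Nat.card_eq_fintype_card]
        simp only [Fintype.card_prod, Fintype.card_fin]
        ring
end

section
/- For every n ≥ 1 and any two distinct permutations π, π' ∈ S_n, the set C_{π,π'} := { ρ ∈ S_{n+1} : ρ covers both π and π' } has cardinality at most 4. -/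
/-- insertion bump -/
def bmp (u t y : ℕ) : ℕ := y + if u ≤ y ∧ y < t then 1 else 0

/-- `a'` is obtained from `a` (length `n`) by deleting the entry at position `b`
(of value `t = a b`), shifting positions `p..b-1` right, inserting value `u` at `p`,
and bumping values in `[u, t)`. -/
def SolN (n : ℕ) (a a' : ℕ → ℕ) (p u b : ℕ) : Prop :=
  p ≤ b ∧ b < n ∧ u ≤ a b ∧ a' p = u ∧
  (∀ i, i < n → (i < p ∨ b < i) → a' i = bmp u (a b) (a i)) ∧
  (∀ i, p < i → i ≤ b → a' i = bmp u (a b) (a (i-1)))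

lemma run_mono (a : ℕ → ℕ) (n s e : ℕ)
    (inj : ∀ i, i < n → ∀ j, j < n → a i = a j → i = j) (he : e < n) (hs : s ≤ e)
    (step : ∀ i, s < i → i ≤ e → a i = a (i-1) + 1 ∨ a i + 1 = a (i-1)) :
    (∀ j, s ≤ j → j ≤ e → a j = a s + (j - s)) ∨
    (∀ j, s ≤ j → j ≤ e → a j + (j - s) = a s) := by
  rcases eq_or_lt_of_le hs with rfl | hlt
  · left
    intro j h1 h2
    have hj : j = s := by omega
    subst hj; omega
  · -- s < e
    have key : ∀ dir : Bool, (if dir then a (s+1) = a s + 1 else a (s+1) + 1 = a s) →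
        ∀ k j, j = s + k → j ≤ e → (if dir then a j = a s + k else a j + k = a s) := by
      intro dir hdir k
      induction k using Nat.strong_induction_on with
      | _ k ih =>
        intro j hj hje
        match k, hj with
        | 0, hj => subst hj; cases dir <;> simp
        | 1, hj => subst hj; cases dir <;> simpa using hdir
        | (m+2), hj =>
          have h1 := ih (m+1) (by omega) (s+(m+1)) rfl (by omega)
          have h2 := ih m (by omega) (s+m) rfl (by omega)
          have hstep := step j (by omega) hje
          have hj1 : j - 1 = s + (m+1) := by omega
          rw [hj1] at hstep
          cases dir <;> simp at h1 h2 ⊢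
          · -- descending
            rcases hstep with h | h
            · exfalso
              have heq : a j = a (s+m) := by omega
              have := inj j (by omega) (s+m) (by omega) heq
              omega
            · omega
          · -- ascending
            rcases hstep with h | h
            · omega
            · exfalso
              have heq : a j = a (s+m) := by omega
              have := inj j (by omega) (s+m) (by omega) heq
              omega
    have hstep1 := step (s+1) (by omega) (by omega)
    rcases hstep1 with h | h
    · left; intro j h1 h2
      have := key true (by simpa using h) (j - s) j (by omega) h2
      simpa using this
    · right; intro j h1 h2
      have := key false (by simpa using h) (j - s) j (by omega) h2
      simpa using this

theorem coreCL (n : ℕ) (a a' : ℕ → ℕ)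
    (inj : ∀ i, i < n → ∀ j, j < n → a i = a j → i = j)
    (p u b p' u' b' : ℕ) (S1 : SolN n a a' p u b) (S2 : SolN n a a' p' u' b')
    (hpp : p < p') :
    ((∀ j, p ≤ j → j < p' → a j = u + (j - p)) ∧ u' = u + (p' - p))
    ∨ ((∀ j, p ≤ j → j < p' → a j + (j - p) + 1 = u) ∧ u' + (p' - p) = u)
    ∨ (∀ i, i < n → a i = a' i) := by
  obtain ⟨hpb, hbn, hut, hap, hA, hC⟩ := S1
  obtain ⟨hpb', hbn', hut', hap', hA', hC'⟩ := S2
  have hpn : p < n := by omega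
  have hp'n : p' < n := by omega
  have h1 : u = bmp u' (a b') (a p) := by rw [← hap]; exact hA' p hpn (Or.inl hpp)
  have h1' : u = a p ∨ u = a p + 1 := by
    simp only [bmp] at h1; split_ifs at h1 <;> omega
  by_cases hI : p' ≤ b
  · -- CASE I
    have hbp2 : p < b := lt_of_lt_of_le hpp hI
    have htnu : a b ≠ a p := fun h => by have := inj b hbn p hpn h; omega
    have h2 : u' = bmp u (a b) (a (p'-1)) := by
      rw [← hap']; exact hC p' hpp hI
    have h3 : ∀ i, p < i → i < p' → bmp u (a b) (a (i-1)) = bmp u' (a b') (a i) := by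
      intro i hi1 hi2
      rw [← hC i hi1 (by omega), hA' i (by omega) (Or.inl hi2)]
    have step : ∀ i, p < i → i ≤ p' - 1 → a i = a (i-1) + 1 ∨ a i + 1 = a (i-1) := by
      intro i hi1 hi2
      have h3i := h3 i hi1 (by omega)
      have hne : a i ≠ a (i-1) := fun h => by
        have := inj i (by omega) (i-1) (by omega) h; omega
      simp only [bmp] at h3i; split_ifs at h3i <;> omega
    have run := run_mono a n p (p'-1) inj (by omega) (by omega) step
    rcases h1' with hu | hu
    · -- u = a p
      by_cases hk : p' = p + 1
      · left
        constructor
        · intro j hj1 hj2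
          have : j = p := by omega
          subst this; omega
        · simp only [bmp] at h2
          have : p' - 1 = p := by omega
          rw [this] at h2
          split_ifs at h2 <;> omega
      · rcases run with asc | desc
        · left
          have hvals : ∀ j, p ≤ j → j < p' → a j = u + (j - p) := by
            intro j hj1 hj2
            have := asc j hj1 (by omega); omega
          refine ⟨hvals, ?_⟩
          have hvp := hvals (p'-1) (by omega) (by omega)
          have hlt : a (p'-1) < a b := by
            by_contra hge
            push_neg at hge
            have hm : a b - u ≤ p' - 1 - p := by omega
            have hv := hvals (p + (a b - u)) (by omega) (by omega)
            have heq : a (p + (a b - u)) = a b := by omega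
            have := inj (p + (a b - u)) (by omega) b hbn heq
            omega
          have hv2 := hvals (p'-1) (by omega) (by omega)
          simp only [bmp] at h2
          split_ifs at h2 <;> omega
        · -- contradiction: i = p+1
          exfalso
          have h3i := h3 (p+1) (by omega) (by omega)
          have hd := desc (p+1) (by omega) (by omega)
          simp only [bmp, Nat.add_sub_cancel] at h3i
          split_ifs at h3i <;> omega
    · -- u = a p + 1
      by_cases hk : p' = p + 1
      · right; left
        constructor
        · intro j hj1 hj2
          have : j = p := by omega
          subst this; omega
        · simp only [bmp] at h2
          have : p' - 1 = p := by omega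
          rw [this] at h2
          split_ifs at h2 <;> omega
      · rcases run with asc | desc
        · exfalso
          have h3i := h3 (p+1) (by omega) (by omega)
          have hd := asc (p+1) (by omega) (by omega)
          simp only [bmp, Nat.add_sub_cancel] at h3i
          split_ifs at h3i <;> omega
        · right; left
          have hvals : ∀ j, p ≤ j → j < p' → a j + (j - p) + 1 = u := by
            intro j hj1 hj2
            have := desc j hj1 (by omega); omega
          refine ⟨hvals, ?_⟩
          have hv2 := hvals (p'-1) (by omega) (by omega)
          simp only [bmp] at h2
          split_ifs at h2 <;> omega
  · -- CASE II : b < p'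
    right; right
    push_neg at hI
    by_cases hbp : b = p
    · subst hbp
      have hu : u = a b := by
        simp only [bmp] at h1; split_ifs at h1 <;> omega
      intro i hin
      by_cases hip : i = b
      · subst hip; omega
      · have := hA i hin (by omega)
        simp only [bmp] at this
        split_ifs at this <;> omega
    · have hbp2 : p < b := by omega
      have step : ∀ i, p < i → i ≤ b → a i = a (i-1) + 1 ∨ a i + 1 = a (i-1) := by
        intro i hi1 hi2
        have e1 := hC i hi1 hi2
        have e2 := hA' i (by omega) (Or.inl (by omega))
        rw [e2] at e1
        have hne : a i ≠ a (i-1) := fun h => by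
          have := inj i (by omega) (i-1) (by omega) h; omega
        simp only [bmp] at e1; split_ifs at e1 <;> omega
      have run := run_mono a n p b inj hbn (by omega) step
      rcases run with asc | desc
      · have htb := asc b (by omega) (by omega)
        rcases h1' with hu | hu
        · -- EqOn
          intro i hin
          by_cases hip : i = p
          · subst hip; omega
          · by_cases hmid : p < i ∧ i ≤ b
            · have e1 := hC i hmid.1 hmid.2
              have hv1 := asc (i-1) (by omega) (by omega)
              have hv2 := asc i (by omega) (by omega)
              simp only [bmp] at e1
              split_ifs at e1 <;> omega
            · have e1 := hA i hin (by omega)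
              have hnotin : ¬ (u ≤ a i ∧ a i < a b) := by
                rintro ⟨hg1, hg2⟩
                have hv := asc (p + (a i - u)) (by omega) (by omega)
                have : a (p + (a i - u)) = a i := by omega
                have := inj (p + (a i - u)) (by omega) i hin this
                omega
              simp only [bmp] at e1
              split_ifs at e1 <;> omega
        · -- u = a p + 1 : contradiction
          exfalso
          have e1 := hC (p+1) (by omega) (by omega)
          have e2 := hA' (p+1) (by omega) (Or.inl (by omega))
          rw [e2] at e1
          have hv := asc (p+1) (by omega) (by omega)
          simp only [bmp, Nat.add_sub_cancel] at e1
          split_ifs at e1 <;> omega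
      · exfalso
        have htb := desc b (by omega) (by omega)
        simp only [bmp] at h1
        split_ifs at h1 <;> omega

lemma sm_shift {n : ℕ} (f : Fin n → Fin (n+1)) (hf : StrictMono f) :
    ∀ k : ℕ, ∀ i j : Fin n, (j:ℕ) = (i:ℕ) + k → (f i : ℕ) + k ≤ f j := by
  intro k
  induction k with
  | zero => intro i j h; have : i = j := Fin.ext (by omega); subst this; omega
  | succ m ih =>
    intro i j h
    have hj : (i:ℕ) + m < n := by omega
    have h1 := ih i ⟨(i:ℕ)+m, hj⟩ rfl
    have h2 : f ⟨(i:ℕ)+m, hj⟩ < f j := hf (by rw [Fin.lt_def]; simp only [Fin.coe_castSucc]; omega)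
    have := Fin.lt_def.mp h2
    omega

lemma sm_lb {n : ℕ} (f : Fin n → Fin (n+1)) (hf : StrictMono f) (i : Fin n) :
    (i:ℕ) ≤ f i := by
  have h0 : (0:ℕ) + (i:ℕ) ≤ n := by omega
  have := sm_shift f hf i ⟨0, by omega⟩ i (by simp)
  omega

lemma sm_ub {n : ℕ} (f : Fin n → Fin (n+1)) (hf : StrictMono f) (i : Fin n) :
    (f i : ℕ) ≤ (i:ℕ) + 1 := by
  have hn : 0 < n := i.pos
  have hlast : n - 1 < n := by omega
  have hi := i.isLt
  have hv : ((⟨n-1, hlast⟩ : Fin n) : ℕ) = n - 1 := rfl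
  have := sm_shift f hf (n - 1 - (i:ℕ)) i ⟨n-1, hlast⟩ (by omega)
  have hle := (f ⟨n-1, hlast⟩).is_le
  omega

lemma strictMono_exists_succAbove {n : ℕ} (f : Fin n → Fin (n+1)) (hf : StrictMono f) :
    ∃ p : Fin (n+1), ∀ i, f i = p.succAbove i := by
  classical
  by_cases hS : ∃ i : Fin n, (f i : ℕ) = (i:ℕ) + 1
  · -- p = castSucc of the minimal such i
    have hne : (Finset.univ.filter (fun i : Fin n => (f i : ℕ) = (i:ℕ) + 1)).Nonempty := by
      obtain ⟨i, hi⟩ := hS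
      exact ⟨i, by simp [hi]⟩
    set i0 := Finset.min' _ hne with hi0
    have hi0mem : (f i0 : ℕ) = (i0:ℕ) + 1 := by
      have := Finset.min'_mem _ hne
      simpa using this
    refine ⟨i0.castSucc, fun i => ?_⟩
    by_cases hlt : (i:ℕ) < (i0:ℕ)
    · have h1 : (f i : ℕ) = (i:ℕ) := by
        rcases Nat.lt_or_ge (f i : ℕ) ((i:ℕ)+1) with h | h
        · have := sm_lb f hf i; omega
        · exfalso
          have hub := sm_ub f hf i
          have hmem : i ∈ Finset.univ.filter (fun i : Fin n => (f i : ℕ) = (i:ℕ) + 1) := by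
            simp; omega
          have := Finset.min'_le _ i hmem
          rw [← hi0] at this
          have : (i0 : Fin n) ≤ i := this
          have := Fin.le_def.mp this
          omega
      rw [Fin.succAbove_of_castSucc_lt _ _ (by rw [Fin.lt_def]; simp only [Fin.coe_castSucc]; omega)]
      exact Fin.ext (by simpa using h1)
    · have h1 : (f i : ℕ) = (i:ℕ) + 1 := by
        have := sm_shift f hf ((i:ℕ) - (i0:ℕ)) i0 i (by omega)
        have := sm_ub f hf i
        omega
      rw [Fin.succAbove_of_le_castSucc _ _ (by rw [Fin.le_def]; simp only [Fin.coe_castSucc]; omega)]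
      exact Fin.ext (by simpa using h1)
  · refine ⟨Fin.last n, fun i => ?_⟩
    push_neg at hS
    rw [Fin.succAbove_last]
    have h1 := sm_lb f hf i
    have h2 := sm_ub f hf i
    have h3 := hS i
    exact Fin.ext (by simp [Fin.coe_castSucc]; omega)


def Eqn {n : ℕ} (ρ : Equiv.Perm (Fin (n+1))) (p : Fin (n+1)) (π : Equiv.Perm (Fin n)) : Prop :=
  ∀ i : Fin n, (ρ (p.succAbove i) : ℕ) = (π i : ℕ) + if (ρ p : ℕ) ≤ (π i : ℕ) then 1 else 0

lemma succAbove_val {n : ℕ} (p : Fin (n+1)) (i : Fin n) :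
    (p.succAbove i : ℕ) = if (i:ℕ) < (p:ℕ) then (i:ℕ) else (i:ℕ)+1 := by
  by_cases h : (i:ℕ) < (p:ℕ)
  · rw [Fin.succAbove_of_castSucc_lt _ _ (by rw [Fin.lt_def]; simpa using h)]
    simp [h]
  · rw [Fin.succAbove_of_le_castSucc _ _ (by rw [Fin.le_def]; simp only [Fin.coe_castSucc]; omega)]
    simp [h]

lemma perm_rank {n : ℕ} (π : Equiv.Perm (Fin n)) (i : Fin n) :
    (π i : ℕ) = (Finset.univ.filter (fun j => π j < π i)).card := by
  have h : (Finset.univ.filter (fun j => π j < π i)).card = (Finset.Iio (π i)).card := by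
    apply Finset.card_bij (fun j _ => π j)
    · intro a ha; simp only [Finset.mem_filter] at ha; simp [ha.2]
    · intro a _ b _ hab; exact π.injective hab
    · intro v hv
      simp only [Finset.mem_Iio] at hv
      exact ⟨π.symm v, by simp [hv], by simp⟩
  rw [h, Fin.card_Iio]

lemma count_sa {n : ℕ} (ρ : Equiv.Perm (Fin (n+1))) (p : Fin (n+1)) (i : Fin n) :
    (Finset.univ.filter (fun j : Fin n => ρ (p.succAbove j) < ρ (p.succAbove i))).card
      = (ρ (p.succAbove i) : ℕ) - (if (ρ p:ℕ) < (ρ (p.succAbove i):ℕ) then 1 else 0) := by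
  have h : (Finset.univ.filter (fun j : Fin n => ρ (p.succAbove j) < ρ (p.succAbove i))).card
      = ((Finset.Iio (ρ (p.succAbove i))).erase (ρ p)).card := by
    apply Finset.card_bij (fun j _ => ρ (p.succAbove j))
    · intro a ha
      simp only [Finset.mem_filter] at ha
      refine Finset.mem_erase.mpr ⟨?_, Finset.mem_Iio.mpr ha.2⟩
      exact fun h => (Fin.succAbove_ne p a) (ρ.injective h)
    · intro a _ b _ hab
      exact Fin.succAbove_right_injective (ρ.injective hab)
    · intro v hv
      obtain ⟨hv1, hv2⟩ := Finset.mem_erase.mp hv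
      have hx : ρ.symm v ≠ p := fun h => hv1 (by rw [← h]; simp)
      obtain ⟨j, hj⟩ := Fin.exists_succAbove_eq hx
      exact ⟨j, by simp [hj, Finset.mem_Iio.mp hv2], by simp [hj]⟩
  rw [h]
  by_cases hm : ρ p < ρ (p.succAbove i)
  · rw [Finset.card_erase_of_mem (Finset.mem_Iio.mpr hm), Fin.card_Iio]
    rw [if_pos (Fin.lt_def.mp hm)]
  · rw [Finset.erase_eq_of_notMem (fun h => hm (Finset.mem_Iio.mp h)), Fin.card_Iio]
    rw [if_neg (fun h => hm (Fin.lt_def.mpr h))]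
    omega

lemma covers_iff {n : ℕ} (ρ : Equiv.Perm (Fin (n+1))) (π : Equiv.Perm (Fin n)) :
    Covers ρ π ↔ ∃ p, Eqn ρ p π := by
  constructor
  · rintro ⟨f, hf, hord⟩
    obtain ⟨p, hp⟩ := strictMono_exists_succAbove f hf
    refine ⟨p, fun i => ?_⟩
    have hvals : (π i : ℕ) = (ρ (p.succAbove i) : ℕ)
        - (if (ρ p:ℕ) < (ρ (p.succAbove i):ℕ) then 1 else 0) := by
      rw [perm_rank π i, ← count_sa]
      congr 1
      apply Finset.filter_congr
      intro j _
      simp only [← hp]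
      simp [hord j i]
    have hne : ρ (p.succAbove i) ≠ ρ p := fun h => (Fin.succAbove_ne p i) (ρ.injective h)
    have hne' : (ρ (p.succAbove i) : ℕ) ≠ (ρ p : ℕ) := fun h => hne (Fin.ext h)
    split_ifs at hvals ⊢ <;> omega
  · rintro ⟨p, hp⟩
    refine ⟨p.succAbove, Fin.strictMono_succAbove p, fun i j => ?_⟩
    rw [Fin.lt_def, Fin.lt_def]
    have hi := hp i
    have hj := hp j
    split_ifs at hi hj <;> omega

def aN {n : ℕ} (π : Equiv.Perm (Fin n)) : ℕ → ℕ :=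
  fun i => if h : i < n then (π ⟨i,h⟩ : ℕ) else 0

lemma aN_eq {n : ℕ} (π : Equiv.Perm (Fin n)) {i : ℕ} (h : i < n) :
    aN π i = (π ⟨i,h⟩ : ℕ) := dif_pos h

lemma aN_inj {n : ℕ} (π : Equiv.Perm (Fin n)) :
    ∀ i, i < n → ∀ j, j < n → aN π i = aN π j → i = j := by
  intro i hi j hj h
  rw [aN_eq π hi, aN_eq π hj] at h
  have := π.injective (Fin.ext h : π ⟨i,hi⟩ = π ⟨j,hj⟩)
  simpa using congrArg Fin.val this

lemma bsolve (U W y y' : ℕ) (hUW : U < W) (hy : y ≠ W - 1)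
    (h : y' + (if W ≤ y' then 1 else 0) = y + (if U ≤ y then 1 else 0)) :
    y' = bmp U (W-1) y := by
  simp only [bmp]
  split_ifs at h ⊢ <;> omega

lemma sol_of_eqn {n : ℕ} (ρ : Equiv.Perm (Fin (n+1))) (p q : Fin (n+1))
    (π π' : Equiv.Perm (Fin n)) (hpq : (p:ℕ) < (q:ℕ)) (huw : (ρ p:ℕ) < (ρ q:ℕ))
    (h1 : Eqn ρ p π) (h2 : Eqn ρ q π') :
    SolN n (aN π) (aN π') (p:ℕ) ((ρ p):ℕ) ((q:ℕ) - 1) := by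
  have hQle := q.isLt
  have hQn : (q:ℕ) - 1 < n := by omega
  have hPn : (p:ℕ) < n := by omega
  have hF2 : (π ⟨(q:ℕ)-1, hQn⟩ : ℕ) = (ρ q:ℕ) - 1 ∧ (ρ p:ℕ) ≤ (ρ q:ℕ) - 1 := by
    have hb := h1 ⟨(q:ℕ)-1, hQn⟩
    have hsa : p.succAbove ⟨(q:ℕ)-1, hQn⟩ = q := by
      apply Fin.ext
      rw [succAbove_val]
      simp only [Fin.val_mk]
      rw [if_neg (by omega)]
      omega
    rw [hsa] at hb
    split_ifs at hb <;> omega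
  have hyne : ∀ (i : ℕ) (hin : i < n), i ≠ (q:ℕ)-1 →
      (π ⟨i, hin⟩ : ℕ) ≠ (ρ q:ℕ) - 1 := by
    intro i hin hne h
    apply hne
    have := π.injective (Fin.ext (h.trans hF2.1.symm) : π ⟨i,hin⟩ = π ⟨(q:ℕ)-1,hQn⟩)
    simpa using congrArg Fin.val this
  refine ⟨by omega, hQn, ?_, ?_, ?_, ?_⟩
  · rw [aN_eq π hQn]; omega
  · -- a' p = u
    have hb := h2 ⟨(p:ℕ), hPn⟩
    have hsa : q.succAbove ⟨(p:ℕ), hPn⟩ = p := by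
      apply Fin.ext
      rw [succAbove_val]
      simp only [Fin.val_mk]
      rw [if_pos (by omega)]
    rw [hsa] at hb
    rw [aN_eq π' hPn]
    split_ifs at hb <;> omega
  · -- region A
    intro i hin hreg
    have hii := h1 ⟨i, hin⟩
    have hii' := h2 ⟨i, hin⟩
    rw [aN_eq π' hin, aN_eq π hQn, aN_eq π hin, hF2.1]
    rcases hreg with hlt | hgt
    · have hsa : p.succAbove ⟨i, hin⟩ = q.succAbove ⟨i, hin⟩ := by
        apply Fin.ext; rw [succAbove_val, succAbove_val]
        simp only [Fin.val_mk]
        rw [if_pos (by omega), if_pos (by omega)]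
      rw [hsa] at hii
      exact bsolve _ _ _ _ huw (hyne i hin (by omega)) (hii.symm.trans hii').symm
    · have hsa : p.succAbove ⟨i, hin⟩ = q.succAbove ⟨i, hin⟩ := by
        apply Fin.ext; rw [succAbove_val, succAbove_val]
        simp only [Fin.val_mk]
        rw [if_neg (by omega), if_neg (by omega)]
      rw [hsa] at hii
      exact bsolve _ _ _ _ huw (hyne i hin (by omega)) (hii.symm.trans hii').symm
  · -- region C
    intro i hiP hib
    have hin : i < n := by omega
    have hprev : i - 1 < n := by omega
    have hii := h1 ⟨i-1, hprev⟩
    have hii' := h2 ⟨i, hin⟩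
    rw [aN_eq π' hin, aN_eq π hQn, aN_eq π hprev, hF2.1]
    have hsa : p.succAbove ⟨i-1, hprev⟩ = q.succAbove ⟨i, hin⟩ := by
      apply Fin.ext; rw [succAbove_val, succAbove_val]
      simp only [Fin.val_mk]
      rw [if_neg (by omega), if_pos (by omega)]
      omega
    rw [hsa] at hii
    exact bsolve _ _ _ _ huw (hyne (i-1) hprev (by omega)) (hii.symm.trans hii').symm

def insN (a : ℕ → ℕ) (p u x : ℕ) : ℕ :=
  if x < p then a x + (if u ≤ a x then 1 else 0)
  else if x = p then u
  else a (x-1) + (if u ≤ a (x-1) then 1 else 0)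

lemma rho_of_eqn {n : ℕ} (ρ : Equiv.Perm (Fin (n+1))) (p : Fin (n+1))
    (π : Equiv.Perm (Fin n)) (h1 : Eqn ρ p π) (x : Fin (n+1)) :
    (ρ x : ℕ) = insN (aN π) (p:ℕ) ((ρ p):ℕ) (x:ℕ) := by
  by_cases hx : x = p
  · subst hx
    simp [insN]
  · obtain ⟨j, hj⟩ := Fin.exists_succAbove_eq hx
    have hji := h1 j
    rw [hj] at hji
    have hxv : (x:ℕ) = if (j:ℕ) < (p:ℕ) then (j:ℕ) else (j:ℕ)+1 := by
      rw [← hj, succAbove_val]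
    by_cases hlt : (j:ℕ) < (p:ℕ)
    · rw [if_pos hlt] at hxv
      simp only [insN]
      rw [if_pos (by omega), hxv, aN_eq π j.isLt]
      simpa using hji
    · rw [if_neg hlt] at hxv
      simp only [insN]
      rw [if_neg (by omega), if_neg (by omega), hxv]
      have : (j:ℕ) + 1 - 1 = (j:ℕ) := by omega
      rw [this, aN_eq π j.isLt]
      simpa using hji

lemma insN_eq_asc (n : ℕ) (a : ℕ → ℕ)
    (inj : ∀ i, i < n → ∀ j, j < n → a i = a j → i = j)
    (p u p' u' : ℕ) (hpp : p < p') (hp'n : p' < n)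
    (hvals : ∀ j, p ≤ j → j < p' → a j = u + (j - p)) (hu' : u' = u + (p' - p)) :
    ∀ x, x ≤ n → insN a p u x = insN a p' u' x := by
  intro x hx
  by_cases h1x : x < p
  · have hni : ¬(u ≤ a x ∧ a x < u') := by
      rintro ⟨hg1, hg2⟩
      have hv := hvals (p + (a x - u)) (by omega) (by omega)
      have := inj x (by omega) (p + (a x - u)) (by omega) (by omega)
      omega
    simp only [insN]
    split_ifs <;> omega
  · by_cases h2x : x = p
    · have hax : a x = u := by
        have := hvals p le_rfl hpp; rw [h2x]; omega
      simp only [insN]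
      split_ifs <;> omega
    · by_cases h3x : x < p'
      · have hv := hvals (x-1) (by omega) (by omega)
        have hvx := hvals x (by omega) h3x
        simp only [insN]
        split_ifs <;> omega
      · by_cases h4x : x = p'
        · have hv := hvals (x-1) (by omega) (by omega)
          simp only [insN]
          split_ifs <;> omega
        · have hni : ¬(u ≤ a (x-1) ∧ a (x-1) < u') := by
            rintro ⟨hg1, hg2⟩
            have hv := hvals (p + (a (x-1) - u)) (by omega) (by omega)
            have := inj (x-1) (by omega) (p + (a (x-1) - u)) (by omega) (by omega)
            omega
          simp only [insN]
          split_ifs <;> omega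

lemma insN_eq_desc (n : ℕ) (a : ℕ → ℕ)
    (inj : ∀ i, i < n → ∀ j, j < n → a i = a j → i = j)
    (p u p' u' : ℕ) (hpp : p < p') (hp'n : p' < n)
    (hvals : ∀ j, p ≤ j → j < p' → a j + (j - p) + 1 = u) (hu' : u' + (p' - p) = u) :
    ∀ x, x ≤ n → insN a p u x = insN a p' u' x := by
  intro x hx
  by_cases h1x : x < p
  · have hni : ¬(u' ≤ a x ∧ a x < u) := by
      rintro ⟨hg1, hg2⟩
      have hv := hvals (p + (u - 1 - a x)) (by omega) (by omega)
      have := inj x (by omega) (p + (u - 1 - a x)) (by omega) (by omega)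
      omega
    simp only [insN]
    split_ifs <;> omega
  · by_cases h2x : x = p
    · have hax : a x + 1 = u := by
        have := hvals p le_rfl hpp; rw [h2x]; omega
      simp only [insN]
      split_ifs <;> omega
    · by_cases h3x : x < p'
      · have hv := hvals (x-1) (by omega) (by omega)
        have hvx := hvals x (by omega) h3x
        simp only [insN]
        split_ifs <;> omega
      · by_cases h4x : x = p'
        · have hv := hvals (x-1) (by omega) (by omega)
          simp only [insN]
          split_ifs <;> omega
        · have hni : ¬(u' ≤ a (x-1) ∧ a (x-1) < u) := by
            rintro ⟨hg1, hg2⟩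
            have hv := hvals (p + (u - 1 - a (x-1))) (by omega) (by omega)
            have := inj (x-1) (by omega) (p + (u - 1 - a (x-1))) (by omega) (by omega)
            omega
          simp only [insN]
          split_ifs <;> omega

def Cls {n : ℕ} (π π' : Equiv.Perm (Fin n)) : Set (Equiv.Perm (Fin (n+1))) :=
  {ρ | ∃ p q : Fin (n+1), (p:ℕ) < (q:ℕ) ∧ (ρ p:ℕ) < (ρ q:ℕ) ∧ Eqn ρ p π ∧ Eqn ρ q π'}

def Cls2 {n : ℕ} (π π' : Equiv.Perm (Fin n)) : Set (Equiv.Perm (Fin (n+1))) :=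
  {ρ | ∃ p q : Fin (n+1), (p:ℕ) < (q:ℕ) ∧ (ρ q:ℕ) < (ρ p:ℕ) ∧ Eqn ρ p π ∧ Eqn ρ q π'}

lemma eq_of_ins {n : ℕ} (ρ σ : Equiv.Perm (Fin (n+1))) (p p' : Fin (n+1))
    (π : Equiv.Perm (Fin n)) (h1 : Eqn ρ p π) (h1' : Eqn σ p' π)
    (hins : ∀ x, x ≤ n → insN (aN π) (p:ℕ) ((ρ p):ℕ) x = insN (aN π) (p':ℕ) ((σ p'):ℕ) x) :
    ρ = σ := by
  apply Equiv.ext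
  intro x
  apply Fin.ext
  rw [rho_of_eqn ρ p π h1 x, rho_of_eqn σ p' π h1' x]
  exact hins x (by have := x.isLt; omega)

lemma cls_pair_eq {n : ℕ} (π π' : Equiv.Perm (Fin n)) (hne : π ≠ π')
    (ρ σ : Equiv.Perm (Fin (n+1))) (p q p' q' : Fin (n+1))
    (hpq : (p:ℕ) < (q:ℕ)) (huw : (ρ p:ℕ) < (ρ q:ℕ)) (h1 : Eqn ρ p π) (h2 : Eqn ρ q π')
    (hpq' : (p':ℕ) < (q':ℕ)) (huw' : (σ p':ℕ) < (σ q':ℕ)) (h1' : Eqn σ p' π)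
    (h2' : Eqn σ q' π') (hlt : (p:ℕ) < (p':ℕ)) : ρ = σ := by
  have S1 := sol_of_eqn ρ p q π π' hpq huw h1 h2
  have S2 := sol_of_eqn σ p' q' π π' hpq' huw' h1' h2'
  have hp'n : (p':ℕ) < n := by
    have := S2.1
    have := S2.2.1
    omega
  have CC := coreCL n (aN π) (aN π') (aN_inj π) (p:ℕ) ((ρ p):ℕ) ((q:ℕ)-1)
      (p':ℕ) ((σ p'):ℕ) ((q':ℕ)-1) S1 S2 hlt
  rcases CC with ⟨hvals, hu⟩ | ⟨hvals, hu⟩ | heq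
  · exact eq_of_ins ρ σ p p' π h1 h1'
      (insN_eq_asc n (aN π) (aN_inj π) _ _ _ _ hlt hp'n hvals hu)
  · exact eq_of_ins ρ σ p p' π h1 h1'
      (insN_eq_desc n (aN π) (aN_inj π) _ _ _ _ hlt hp'n hvals hu)
  · exfalso
    apply hne
    apply Equiv.ext
    intro i
    apply Fin.ext
    have hi := heq (i:ℕ) i.isLt
    rw [aN_eq π i.isLt, aN_eq π' i.isLt] at hi
    simpa using hi
lemma cls_subsingleton {n : ℕ} (π π' : Equiv.Perm (Fin n)) (hne : π ≠ π') :
    (Cls π π').Subsingleton := by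
  rintro ρ ⟨p, q, hpq, huw, h1, h2⟩ σ ⟨p', q', hpq', huw', h1', h2'⟩
  rcases lt_trichotomy ((p:ℕ)) ((p':ℕ)) with h | h | h
  · exact cls_pair_eq π π' hne ρ σ p q p' q' hpq huw h1 h2 hpq' huw' h1' h2' h
  · have hpe : p = p' := Fin.ext h
    subst hpe
    have S1 := sol_of_eqn ρ p q π π' hpq huw h1 h2
    have S2 := sol_of_eqn σ p q' π π' hpq' huw' h1' h2'
    have hU : ((ρ p):ℕ) = ((σ p):ℕ) := by
      have e1 := S1.2.2.2.1
      have e2 := S2.2.2.2.1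
      rw [e1] at e2
      exact e2
    apply eq_of_ins ρ σ p p π h1 h1'
    intro x hx
    rw [hU]
  · exact (cls_pair_eq π π' hne σ ρ p' q' p q hpq' huw' h1' h2' hpq huw h1 h2 h).symm

def cP {n : ℕ} (π : Equiv.Perm (Fin n)) : Equiv.Perm (Fin n) := π.trans Fin.revPerm

lemma cP_inj {n : ℕ} (π π' : Equiv.Perm (Fin n)) (h : cP π = cP π') : π = π' := by
  apply Equiv.ext
  intro i
  have := congrFun (congrArg (fun (e : Equiv.Perm (Fin n)) => (e : Fin n → Fin n)) h) i
  simp only [cP, Equiv.trans_apply, Fin.revPerm_apply] at this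
  exact Fin.rev_injective this

lemma eqn_rev {n : ℕ} (ρ : Equiv.Perm (Fin (n+1))) (p : Fin (n+1)) (π : Equiv.Perm (Fin n))
    (h : Eqn ρ p π) : Eqn (cP ρ) p (cP π) := by
  intro i
  have hi := h i
  have hne : (ρ (p.succAbove i) : ℕ) ≠ (ρ p : ℕ) := by
    intro he
    exact (Fin.succAbove_ne p i) (ρ.injective (Fin.ext he))
  have hb1 := (ρ (p.succAbove i)).isLt
  have hb2 := (ρ p).isLt
  have hb3 := (π i).isLt
  simp only [cP, Equiv.trans_apply, Fin.revPerm_apply, Fin.val_rev]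
  split_ifs at hi ⊢ <;> omega

lemma cls2_subsingleton {n : ℕ} (π π' : Equiv.Perm (Fin n)) (hne : π ≠ π') :
    (Cls2 π π').Subsingleton := by
  have key : ∀ ρ ∈ Cls2 π π', cP ρ ∈ Cls (cP π) (cP π') := by
    rintro ρ ⟨p, q, hpq, hwu, h1, h2⟩
    refine ⟨p, q, hpq, ?_, eqn_rev ρ p π h1, eqn_rev ρ q π' h2⟩
    have hb1 := (ρ p).isLt
    have hb2 := (ρ q).isLt
    simp only [cP, Equiv.trans_apply, Fin.revPerm_apply, Fin.val_rev]
    omega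
  intro ρ hρ σ hσ
  have hcP : cP ρ = cP σ :=
    cls_subsingleton (cP π) (cP π') (fun h => hne (cP_inj _ _ h)) (key ρ hρ) (key σ hσ)
  exact cP_inj _ _ hcP

lemma eqn_pi_unique {n : ℕ} (ρ : Equiv.Perm (Fin (n+1))) (p : Fin (n+1))
    (π π' : Equiv.Perm (Fin n)) (h1 : Eqn ρ p π) (h2 : Eqn ρ p π') : π = π' := by
  apply Equiv.ext
  intro i
  apply Fin.ext
  have hi := h1 i
  have hi' := h2 i
  rw [hi] at hi'
  split_ifs at hi' <;> omega

lemma ncard_le_one_of_subsingleton {α : Type*} (s : Set α) (h : s.Subsingleton) :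
    s.ncard ≤ 1 := by
  rcases Set.eq_empty_or_nonempty s with rfl | ⟨x, hx⟩
  · simp
  · have hs : s ⊆ {x} := fun y hy => by simp [h hy hx]
    calc s.ncard ≤ ({x} : Set α).ncard := Set.ncard_le_ncard hs (Set.finite_singleton x)
    _ = 1 := Set.ncard_singleton x

theorem common_covers_bound (n : ℕ) (hn : 1 ≤ n) (π π' : Equiv.Perm (Fin n)) (hne : π ≠ π') :
    Set.ncard {ρ : Equiv.Perm (Fin (n+1)) | Covers ρ π ∧ Covers ρ π'} ≤ 4 := by
  have hsub : {ρ : Equiv.Perm (Fin (n+1)) | Covers ρ π ∧ Covers ρ π'} ⊆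
      (Cls π π' ∪ Cls2 π π') ∪ (Cls π' π ∪ Cls2 π' π) := by
    rintro ρ ⟨hc1, hc2⟩
    obtain ⟨p, h1⟩ := (covers_iff ρ π).mp hc1
    obtain ⟨q, h2⟩ := (covers_iff ρ π').mp hc2
    have hpq : p ≠ q := by
      rintro rfl
      exact hne (eqn_pi_unique ρ p π π' h1 h2)
    have hpqv : (p:ℕ) ≠ (q:ℕ) := fun h => hpq (Fin.ext h)
    have hrv : (ρ p:ℕ) ≠ (ρ q:ℕ) := fun h => hpq (ρ.injective (Fin.ext h))
    rcases Nat.lt_or_ge (p:ℕ) (q:ℕ) with hlt | hge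
    · rcases Nat.lt_or_ge ((ρ p):ℕ) ((ρ q):ℕ) with hv | hv
      · exact Or.inl (Or.inl ⟨p, q, hlt, hv, h1, h2⟩)
      · exact Or.inl (Or.inr ⟨p, q, hlt, by omega, h1, h2⟩)
    · have hlt : (q:ℕ) < (p:ℕ) := by omega
      rcases Nat.lt_or_ge ((ρ q):ℕ) ((ρ p):ℕ) with hv | hv
      · exact Or.inr (Or.inl ⟨q, p, hlt, hv, h2, h1⟩)
      · exact Or.inr (Or.inr ⟨q, p, hlt, by omega, h2, h1⟩)
  calc Set.ncard {ρ : Equiv.Perm (Fin (n+1)) | Covers ρ π ∧ Covers ρ π'}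
      ≤ Set.ncard ((Cls π π' ∪ Cls2 π π') ∪ (Cls π' π ∪ Cls2 π' π)) :=
        Set.ncard_le_ncard hsub (Set.toFinite _)
    _ ≤ Set.ncard (Cls π π' ∪ Cls2 π π') + Set.ncard (Cls π' π ∪ Cls2 π' π) :=
        Set.ncard_union_le _ _
    _ ≤ (Set.ncard (Cls π π') + Set.ncard (Cls2 π π'))
        + (Set.ncard (Cls π' π) + Set.ncard (Cls2 π' π)) :=
        Nat.add_le_add (Set.ncard_union_le _ _) (Set.ncard_union_le _ _)
    _ ≤ (1 + 1) + (1 + 1) := by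
        refine Nat.add_le_add (Nat.add_le_add ?_ ?_) (Nat.add_le_add ?_ ?_) <;>
          apply ncard_le_one_of_subsingleton
        · exact cls_subsingleton π π' hne
        · exact cls2_subsingleton π π' hne
        · exact cls_subsingleton π' π (Ne.symm hne)
        · exact cls2_subsingleton π' π (Ne.symm hne)
    _ ≤ 4 := by omega
end

section
/- For every n ≥ 1 and every ρ ∈ S_{n+1}, the number of distinct permutations π ∈ S_n covered by ρ equals n + 1 − s_ρ, where s_ρ is the number of successions of ρ, i.e., the number of indices i ∈ {1,…,n} with ρ(i+1) = ρ(i) + 1 or ρ(i+1) = ρ(i) − 1. -/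
/-- The number of successions of `ρ ∈ S_{n+1}`: indices `i` with `ρ(i+1) = ρ(i) ± 1`. -/
def successions (n : ℕ) (ρ : Equiv.Perm (Fin (n+1))) : ℕ :=
  (Finset.univ.filter fun i : Fin n =>
    ((ρ i.succ : ℕ) = (ρ i.castSucc : ℕ) + 1 ∨ (ρ i.succ : ℕ) + 1 = (ρ i.castSucc : ℕ))).card

namespace CoverProof

variable {n : ℕ}

lemma range_inj_fin {m : ℕ} {f g : Fin n → Fin m} (hf : StrictMono f) (hg : StrictMono g)
    (h : Set.range f = Set.range g) : f = g := by
  have inst : WellFoundedLT (Fin n) := inferInstance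
  exact (@StrictMono.range_inj (Fin n) (Fin m) _ _ inst f g hf hg).1 h

/-- The pattern of `ρ` with position `k` deleted. -/
def delPerm (ρ : Equiv.Perm (Fin (n+1))) (k : Fin (n+1)) : Equiv.Perm (Fin n) :=
  ((finSuccAboveOrderIso k).toEquiv.trans
    (ρ.subtypeEquiv fun a => (ρ.injective.ne_iff (x := a) (y := k)).symm)).trans
    (finSuccAboveOrderIso (ρ k)).toEquiv.symm

lemma delPerm_apply (ρ : Equiv.Perm (Fin (n+1))) (k : Fin (n+1)) (i : Fin n) :
    delPerm ρ k i =
      (finSuccAboveOrderIso (ρ k)).symm ⟨ρ (k.succAbove i), fun h => k.succAbove_ne i (ρ.injective h)⟩ :=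
  rfl

lemma succAbove_delPerm (ρ : Equiv.Perm (Fin (n+1))) (k : Fin (n+1)) (i : Fin n) :
    (ρ k).succAbove (delPerm ρ k i) = ρ (k.succAbove i) := by
  rw [delPerm_apply]
  have := (finSuccAboveOrderIso (ρ k)).apply_symm_apply
    ⟨ρ (k.succAbove i), fun h => k.succAbove_ne i (ρ.injective h)⟩
  rw [Subtype.ext_iff, finSuccAboveOrderIso_apply] at this
  exact this

lemma delPerm_lt (ρ : Equiv.Perm (Fin (n+1))) (k : Fin (n+1)) (i j : Fin n) :
    (delPerm ρ k i < delPerm ρ k j ↔ ρ (k.succAbove i) < ρ (k.succAbove j)) := by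
  rw [delPerm_apply, delPerm_apply, (finSuccAboveOrderIso (ρ k)).symm.lt_iff_lt]
  exact Subtype.mk_lt_mk

lemma perm_eq_of_orderAgree {π π' : Equiv.Perm (Fin n)}
    (h : ∀ i j, π i < π j ↔ π' i < π' j) : π = π' := by
  have hsm : StrictMono fun a => π' (π.symm a) := by
    intro a b hab
    exact (h _ _).1 (by simpa using hab)
  have hid : (fun a => π' (π.symm a)) = id := by
    refine range_inj_fin hsm (strictMono_id (α := Fin n)) ?_
    rw [Set.range_id]
    exact (π'.surjective.comp π.symm.surjective).range_eq
  refine Equiv.ext fun i => ?_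
  have := congrFun hid (π i)
  simpa using this.symm

lemma exists_succAbove {f : Fin n → Fin (n+1)} (hf : StrictMono f) :
    ∃ k : Fin (n+1), f = k.succAbove := by
  classical
  have hcard : (Set.range f).toFinset.card = n := by
    rw [Set.toFinset_range, Finset.card_image_of_injective _ hf.injective,
      Finset.card_univ, Fintype.card_fin]
  have h2 : (Set.range f).toFinsetᶜ.card = 1 := by
    rw [Finset.card_compl, hcard, Fintype.card_fin]
    simp
  obtain ⟨k, hk⟩ := Finset.card_eq_one.1 h2
  refine ⟨k, range_inj_fin hf (Fin.succAboveOrderEmb k).strictMono ?_⟩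
  have h3 : Set.range k.succAbove = {k}ᶜ := Fin.range_succAbove k
  show Set.range f = Set.range k.succAbove
  rw [h3]
  ext x
  have : x ∈ (Set.range f).toFinset ↔ x ∉ ({k} : Finset (Fin (n+1))) := by
    rw [← hk]; simp
  simpa using this

lemma covers_iff (ρ : Equiv.Perm (Fin (n+1))) (π : Equiv.Perm (Fin n)) :
    Covers ρ π ↔ ∃ k, π = delPerm ρ k := by
  constructor
  · rintro ⟨f, hf, hord⟩
    obtain ⟨k, rfl⟩ := exists_succAbove hf
    exact ⟨k, perm_eq_of_orderAgree fun i j => (hord i j).trans (delPerm_lt ρ k i j).symm⟩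
  · rintro ⟨k, rfl⟩
    exact ⟨k.succAbove, (Fin.succAboveOrderEmb k).strictMono, delPerm_lt ρ k⟩

lemma succession_of_delPerm_eq {ρ : Equiv.Perm (Fin (n+1))} {j k : Fin (n+1)}
    (heq : delPerm ρ j = delPerm ρ k) {i : Fin n}
    (h1 : j ≤ i.castSucc) (h2 : i.succ ≤ k) :
    (ρ i.succ : ℕ) = (ρ i.castSucc : ℕ) + 1 ∨ (ρ i.succ : ℕ) + 1 = (ρ i.castSucc : ℕ) := by
  have hji : j.succAbove i = i.succ := Fin.succAbove_of_le_castSucc _ _ h1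
  have hki : k.succAbove i = i.castSucc :=
    Fin.succAbove_of_castSucc_lt _ _ (lt_of_lt_of_le (Fin.castSucc_lt_succ : i.castSucc < i.succ) h2)
  set x := delPerm ρ j i with hx
  have e1 : (ρ j).succAbove x = ρ i.succ := by rw [hx, succAbove_delPerm, hji]
  have e2 : (ρ k).succAbove x = ρ i.castSucc := by rw [hx, heq, succAbove_delPerm, hki]
  have hnat : ∀ p : Fin (n+1), ∀ y : Fin n,
      (p.succAbove y : ℕ) = y ∨ (p.succAbove y : ℕ) = y + 1 := by
    intro p y
    rcases lt_or_ge y.castSucc p with h | h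
    · left; rw [Fin.succAbove_of_castSucc_lt _ _ h]; simp
    · right; rw [Fin.succAbove_of_le_castSucc _ _ h]; simp
  have hne : (ρ i.succ : ℕ) ≠ (ρ i.castSucc : ℕ) := by
    intro h
    exact (Fin.castSucc_lt_succ : i.castSucc < i.succ).ne' (ρ.injective (Fin.val_injective h))
  have a1 := hnat (ρ j) x; rw [e1] at a1
  have a2 := hnat (ρ k) x; rw [e2] at a2
  omega

lemma delPerm_eq_of_succession {ρ : Equiv.Perm (Fin (n+1))} {i : Fin n}
    (h : (ρ i.succ : ℕ) = (ρ i.castSucc : ℕ) + 1 ∨ (ρ i.succ : ℕ) + 1 = (ρ i.castSucc : ℕ)) :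
    delPerm ρ i.castSucc = delPerm ρ i.succ := by
  have key : ∀ c : Fin n, c ≠ i → i.castSucc.succAbove c = i.succ.succAbove c ∧
      i.castSucc.succAbove c ≠ i.castSucc ∧ i.castSucc.succAbove c ≠ i.succ := by
    intro c hc
    have hv : (c : ℕ) ≠ (i : ℕ) := fun h' => hc (Fin.ext h')
    rcases Nat.lt_or_ge (c : ℕ) (i : ℕ) with hlt | hge
    · have p1 : i.castSucc.succAbove c = c.castSucc :=
        Fin.succAbove_of_castSucc_lt _ _ (by rw [Fin.lt_def]; simpa using hlt)
      have p2 : i.succ.succAbove c = c.castSucc :=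
        Fin.succAbove_of_castSucc_lt _ _ (by rw [Fin.lt_def]; simp; omega)
      refine ⟨p1.trans p2.symm, ?_, ?_⟩ <;> rw [p1] <;>
        (intro h'; have := congrArg Fin.val h'; simp at this; omega)
    · have hgt : (i : ℕ) < (c : ℕ) := lt_of_le_of_ne hge (Ne.symm hv)
      have p1 : i.castSucc.succAbove c = c.succ :=
        Fin.succAbove_of_le_castSucc _ _ (by rw [Fin.le_def]; simp; omega)
      have p2 : i.succ.succAbove c = c.succ :=
        Fin.succAbove_of_le_castSucc _ _ (by rw [Fin.le_def]; simp; omega)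
      refine ⟨p1.trans p2.symm, ?_, ?_⟩ <;> rw [p1] <;>
        (intro h'; have := congrArg Fin.val h'; simp at this; omega)
  have hsAi : i.castSucc.succAbove i = i.succ :=
    Fin.succAbove_of_le_castSucc _ _ le_rfl
  have hsBi : i.succ.succAbove i = i.castSucc :=
    Fin.succAbove_of_castSucc_lt _ _ (Fin.castSucc_lt_succ : i.castSucc < i.succ)
  have hvalne : ∀ c : Fin n, c ≠ i →
      (ρ (i.castSucc.succAbove c) : ℕ) ≠ (ρ i.castSucc : ℕ) ∧
      (ρ (i.castSucc.succAbove c) : ℕ) ≠ (ρ i.succ : ℕ) := by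
    intro c hc
    obtain ⟨-, h1, h2⟩ := key c hc
    constructor <;> intro h' <;>
      [exact h1 (ρ.injective (Fin.val_injective h'));
       exact h2 (ρ.injective (Fin.val_injective h'))]
  apply perm_eq_of_orderAgree
  intro a b
  rw [delPerm_lt, delPerm_lt]
  by_cases ha : a = i <;> by_cases hb : b = i
  · subst ha; subst hb; simp
  · subst ha
    obtain ⟨hpb, -, -⟩ := key b hb
    obtain ⟨hb1, hb2⟩ := hvalne b hb
    rw [hsAi, hsBi, ← hpb, Fin.lt_def, Fin.lt_def]
    omega
  · subst hb
    obtain ⟨hpa, -, -⟩ := key a ha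
    obtain ⟨ha1, ha2⟩ := hvalne a ha
    rw [hsAi, hsBi, ← hpa, Fin.lt_def, Fin.lt_def]
    omega
  · rw [(key a ha).1, (key b hb).1]

lemma count_lemma {X : Type*} [DecidableEq X] (F : Fin (n+1) → X)
    (H : ∀ j : Fin (n+1), ∀ i : Fin n, j < i.succ → F j = F i.succ →
      F i.castSucc = F i.succ) :
    (Finset.image F Finset.univ).card
      = n + 1 - (Finset.univ.filter fun k : Fin n => F k.castSucc = F k.succ).card := by
  classical
  set T := Finset.univ.filter (fun k : Fin n => F k.castSucc = F k.succ) with hT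
  set S := Finset.univ.filter (fun i : Fin (n+1) => ∀ j, j < i → F j ≠ F i) with hS
  have h1 : Finset.image F Finset.univ = Finset.image F S := by
    apply Finset.Subset.antisymm _ (Finset.image_subset_image (Finset.subset_univ S))
    intro x hx
    obtain ⟨i, -, rfl⟩ := Finset.mem_image.1 hx
    set M := Finset.univ.filter (fun j => F j = F i) with hM
    have hne : M.Nonempty := ⟨i, by simp [hM]⟩
    set j0 := M.min' hne with hj0
    have hFj0 : F j0 = F i := (Finset.mem_filter.1 (M.min'_mem hne)).2
    refine Finset.mem_image.2 ⟨j0, ?_, hFj0⟩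
    simp only [hS, Finset.mem_filter, Finset.mem_univ, true_and]
    intro j hj hF
    have hjM : j ∈ M := by simp [hM, hF.trans hFj0]
    exact absurd (M.min'_le j hjM) (not_le.2 hj)
  have hinj : Set.InjOn F ↑S := by
    intro a ha b hb hab
    have ha' := (Finset.mem_filter.1 ha).2
    have hb' := (Finset.mem_filter.1 hb).2
    by_contra hne
    rcases lt_or_gt_of_ne hne with h | h
    · exact hb' a h hab
    · exact ha' b h hab.symm
  have h2 : (Finset.image F S).card = S.card := Finset.card_image_of_injOn hinj
  have h3 : Sᶜ = T.image Fin.succ := by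
    ext i
    simp only [Finset.mem_compl, hS, Finset.mem_filter, Finset.mem_univ, true_and,
      not_forall, not_not, Finset.mem_image, hT]
    constructor
    · rintro ⟨j, hj, hF⟩
      have hi0 : i ≠ 0 := by
        intro h; subst h; exact absurd hj (Fin.not_lt_zero j)
      obtain ⟨k, rfl⟩ := Fin.eq_succ_of_ne_zero hi0
      exact ⟨k, H j k hj hF, rfl⟩
    · rintro ⟨k, hk, rfl⟩
      exact ⟨k.castSucc, (Fin.castSucc_lt_succ : k.castSucc < k.succ), hk⟩
  have h4 : Sᶜ.card = T.card := by
    rw [h3, Finset.card_image_of_injective _ (Fin.succ_injective n)]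
  have h5 : Sᶜ.card = Fintype.card (Fin (n+1)) - S.card := Finset.card_compl S
  have h6 : S.card ≤ Fintype.card (Fin (n+1)) := by
    rw [← Finset.card_univ]; exact Finset.card_le_card (Finset.subset_univ S)
  rw [h1, h2]
  rw [Fintype.card_fin] at h5 h6
  omega

end CoverProof

theorem covered_count_eq (n : ℕ) (hn : 1 ≤ n) (ρ : Equiv.Perm (Fin (n+1))) :
    Set.ncard {π : Equiv.Perm (Fin n) | Covers ρ π} = n + 1 - successions n ρ := by
  classical
  have hset : {π : Equiv.Perm (Fin n) | Covers ρ π}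
      = ↑(Finset.image (CoverProof.delPerm ρ) Finset.univ) := by
    ext π
    simp only [Set.mem_setOf_eq, CoverProof.covers_iff, Finset.coe_image, Finset.coe_univ,
      Set.image_univ, Set.mem_range]
    exact exists_congr fun k => eq_comm
  rw [hset, Set.ncard_coe_finset]
  have H : ∀ j : Fin (n+1), ∀ i : Fin n, j < i.succ →
      CoverProof.delPerm ρ j = CoverProof.delPerm ρ i.succ →
      CoverProof.delPerm ρ i.castSucc = CoverProof.delPerm ρ i.succ :=
    fun j i hj heq => CoverProof.delPerm_eq_of_succession
      (CoverProof.succession_of_delPerm_eq heq (Fin.le_castSucc_iff.2 hj) le_rfl)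
  rw [CoverProof.count_lemma (CoverProof.delPerm ρ) H]
  congr 1
  rw [successions]
  congr 1
  ext k
  simp only [Finset.mem_filter, Finset.mem_univ, true_and]
  constructor
  · intro h
    exact CoverProof.succession_of_delPerm_eq h le_rfl le_rfl
  · exact CoverProof.delPerm_eq_of_succession
end

section
/- In the random model with selection probability p ∈ (0,1), the probability that the random set A covers all of S_n satisfies P(X = 0) ≥ (1 − (1−p)^{n²+1})^{n!}. -/
open MeasureTheory

/-- The Bernoulli(p) measure on `Bool`. -/
noncomputable def bern (p : ℝ) : Measure Bool :=
  p.toNNReal • Measure.dirac true + (1-p).toNNReal • Measure.dirac false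

/-- The random model: each permutation of `S_{n+1}` is selected independently with
probability `p`; a sample point `A : Equiv.Perm (Fin (n+1)) → Bool` records which
permutations are selected. -/
noncomputable def coverMeasure (n : ℕ) (p : ℝ) :
    Measure (Equiv.Perm (Fin (n+1)) → Bool) :=
  Measure.pi fun _ => bern p

/-- `numUncovered n A` is the number of `π ∈ S_n` not covered by any selected `ρ ∈ A`. -/
noncomputable def numUncovered (n : ℕ) (A : Equiv.Perm (Fin (n+1)) → Bool) : ℕ :=
  Set.ncard {π : Equiv.Perm (Fin n) | ¬ ∃ ρ : Equiv.Perm (Fin (n+1)), A ρ = true ∧ Covers ρ π}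

open Finset

/-! ### Combinatorics: every `π ∈ S_n` has at least `n² + 1` covers -/

section Comb

variable {n : ℕ}

lemma insFun_injective (π : Equiv.Perm (Fin n)) (i v : Fin (n+1)) :
    Function.Injective (i.insertNth v (fun k => v.succAbove (π k))) := by
  intro x y hxy
  rcases eq_or_ne x i with h | hx
  · subst h
    rcases eq_or_ne y x with h | hy
    · exact h.symm
    · obtain ⟨k, rfl⟩ := Fin.exists_succAbove_eq hy
      rw [Fin.insertNth_apply_same, Fin.insertNth_apply_succAbove] at hxy
      exact absurd hxy.symm (Fin.succAbove_ne v (π k))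
  · obtain ⟨k, rfl⟩ := Fin.exists_succAbove_eq hx
    rcases eq_or_ne y i with h | hy
    · subst h
      rw [Fin.insertNth_apply_same, Fin.insertNth_apply_succAbove] at hxy
      exact absurd hxy (Fin.succAbove_ne v (π k))
    · obtain ⟨k', rfl⟩ := Fin.exists_succAbove_eq hy
      rw [Fin.insertNth_apply_succAbove, Fin.insertNth_apply_succAbove] at hxy
      have := π.injective (Fin.succAbove_right_injective hxy)
      rw [this]

/-- insertion of value `v` at position `i` into `π` -/
noncomputable def insPerm (π : Equiv.Perm (Fin n)) (i v : Fin (n+1)) :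
    Equiv.Perm (Fin (n+1)) :=
  Equiv.ofBijective _ (Finite.injective_iff_bijective.1 (insFun_injective π i v))

lemma insPerm_apply_same (π : Equiv.Perm (Fin n)) (i v : Fin (n+1)) :
    insPerm π i v i = v := by
  simp [insPerm, Fin.insertNth_apply_same]

lemma insPerm_apply_succAbove (π : Equiv.Perm (Fin n)) (i v : Fin (n+1)) (k : Fin n) :
    insPerm π i v (i.succAbove k) = v.succAbove (π k) := by
  simp [insPerm, Fin.insertNth_apply_succAbove]

lemma covers_insPerm (π : Equiv.Perm (Fin n)) (i v : Fin (n+1)) :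
    Covers (insPerm π i v) π := by
  refine ⟨i.succAbove, Fin.strictMono_succAbove i, fun a b => ?_⟩
  rw [insPerm_apply_succAbove, insPerm_apply_succAbove]
  exact ((Fin.strictMono_succAbove v).lt_iff_lt).symm

/-- canonical insertions -/
def Canon (π : Equiv.Perm (Fin n)) (i v : Fin (n+1)) : Prop :=
  ∀ h : i ≠ 0, v ≠ (π (i.pred h)).castSucc ∧ v ≠ (π (i.pred h)).succ

lemma insPerm_ne_of_lt (π : Equiv.Perm (Fin n)) {i v i' v' : Fin (n+1)}
    (hlt : i < i') (hc : Canon π i' v')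
    (heq : insPerm π i v = insPerm π i' v') : False := by
  have h0 : i' ≠ 0 := by
    intro h; rw [h] at hlt; exact absurd hlt (Fin.not_lt_zero i)
  set k := i'.pred h0 with hkdef
  have hk2 : i ≤ Fin.castSucc k := by
    have := hlt
    rw [Fin.lt_def] at this
    simp only [Fin.le_def, Fin.coe_castSucc, hkdef, Fin.coe_pred]
    omega
  have e1 : i.succAbove k = i' := by
    rw [Fin.succAbove_of_le_castSucc _ _ hk2, Fin.succ_pred]
  have hv' : v' = v.succAbove (π k) := by
    have h2 := insPerm_apply_succAbove π i v k
    rw [e1, heq, insPerm_apply_same] at h2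
    exact h2
  obtain ⟨h1, h2⟩ := hc h0
  rcases lt_or_ge (Fin.castSucc (π k)) v with h | h
  · rw [Fin.succAbove_of_castSucc_lt _ _ h] at hv'
    exact h1 hv'
  · rw [Fin.succAbove_of_le_castSucc _ _ h] at hv'
    exact h2 hv'

lemma insPerm_inj (π : Equiv.Perm (Fin n)) {i v i' v' : Fin (n+1)}
    (hc : Canon π i v) (hc' : Canon π i' v')
    (heq : insPerm π i v = insPerm π i' v') : (i, v) = (i', v') := by
  rcases lt_trichotomy i i' with h | rfl | h
  · exact absurd heq (fun e => insPerm_ne_of_lt π h hc' e)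
  · have hv : v = v' := by
      have h2 := insPerm_apply_same π i v
      rw [heq, insPerm_apply_same] at h2; exact h2.symm
    rw [hv]
  · exact absurd heq.symm (fun e => insPerm_ne_of_lt π h hc e)

lemma canon_card (hn : 1 ≤ n) (π : Equiv.Perm (Fin n))
    [DecidablePred fun iv : Fin (n+1) × Fin (n+1) => Canon π iv.1 iv.2] :
    n ^ 2 + 1 ≤ (univ.filter (fun iv : Fin (n+1) × Fin (n+1) => Canon π iv.1 iv.2)).card := by
  classical
  have hsplit := Finset.card_filter_add_card_filter_not
    (s := (univ : Finset (Fin (n+1) × Fin (n+1)))) (p := fun iv => Canon π iv.1 iv.2)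
  have huniv : (univ : Finset (Fin (n+1) × Fin (n+1))).card = (n+1) * (n+1) := by
    simp [Finset.card_univ]
  -- bound the non-canonical insertions by 2n
  have hbad : (univ.filter (fun iv : Fin (n+1) × Fin (n+1) => ¬ Canon π iv.1 iv.2)).card
      ≤ n * 2 := by
    have hcard : ((univ : Finset (Fin n × Bool))).card = n * 2 := by
      simp [Finset.card_univ]
    rw [← hcard]
    apply Finset.card_le_card_of_injOn
      (fun iv => if h : iv.1 ≠ 0 then (iv.1.pred h, decide (iv.2 = (π (iv.1.pred h)).castSucc))
        else (⟨0, by omega⟩, false))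
    · intro iv _; exact Finset.mem_univ _
    · intro a ha b hb hab
      simp only [Finset.coe_filter, Set.mem_setOf_eq, Canon, not_forall] at ha hb
      obtain ⟨ha0, hav⟩ := ha.2
      obtain ⟨hb0, hbv⟩ := hb.2
      rw [not_and_or, not_ne_iff, not_ne_iff] at hav hbv
      simp only [dif_pos ha0, dif_pos hb0, Prod.mk.injEq] at hab
      obtain ⟨h1, h2⟩ := hab
      have hi : a.1 = b.1 := by
        rwa [Fin.pred_inj] at h1
      have hv : a.2 = b.2 := by
        rw [decide_eq_decide] at h2
        have h1' : π (a.1.pred ha0) = π (b.1.pred hb0) := by rw [h1]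
        rcases hav with h | h
        · have := h2.mp h
          rw [h, this, h1']
        · rcases hbv with h' | h'
          · have := h2.mpr h'
            exact absurd (this.symm.trans h) Fin.castSucc_lt_succ.ne
          · rw [h, h', h1']
      exact Prod.ext hi hv
  have hring : (n+1) * (n+1) = n ^ 2 + 2 * n + 1 := by ring
  omega

lemma covers_card (hn : 1 ≤ n) (π : Equiv.Perm (Fin n))
    [DecidablePred fun ρ : Equiv.Perm (Fin (n+1)) => Covers ρ π] :
    n ^ 2 + 1 ≤ (univ.filter (fun ρ : Equiv.Perm (Fin (n+1)) => Covers ρ π)).card := by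
  classical
  refine le_trans (canon_card hn π) ?_
  apply Finset.card_le_card_of_injOn (fun iv => insPerm π iv.1 iv.2)
  · intro iv hiv
    simp only [Finset.coe_filter, Set.mem_setOf_eq, Finset.mem_filter, Finset.mem_univ, true_and]
    exact covers_insPerm π iv.1 iv.2
  · intro a ha b hb hab
    simp only [Finset.coe_filter, Set.mem_setOf_eq] at ha hb
    have := insPerm_inj π ha.2 hb.2 hab
    exact Prod.ext (congrArg Prod.fst this) (congrArg Prod.snd this)

end Comb

/-! ### Probability -/

section Prob

variable {n : ℕ} {p : ℝ}

/-- weight of a single coordinate -/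
noncomputable def wt (p : ℝ) (b : Bool) : ℝ := if b then p else 1 - p

/-- weight (probability) of a sample point -/
noncomputable def Wt (p : ℝ) (A : Equiv.Perm (Fin (n+1)) → Bool) : ℝ := ∏ ρ, wt p (A ρ)

lemma wt_nonneg (hp0 : 0 ≤ p) (hp1 : p ≤ 1) (b : Bool) : 0 ≤ wt p b := by
  cases b <;> simp [wt] <;> linarith

lemma Wt_nonneg (hp0 : 0 ≤ p) (hp1 : p ≤ 1) (A : Equiv.Perm (Fin (n+1)) → Bool) :
    0 ≤ Wt p A :=
  Finset.prod_nonneg fun ρ _ => wt_nonneg hp0 hp1 _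

lemma sum_prod_bool {ι : Type*} [Fintype ι] [DecidableEq ι] (g : ι → Bool → ℝ) :
    ∑ A : ι → Bool, ∏ i, g i (A i) = ∏ i, (g i true + g i false) := by
  classical
  have h := Finset.prod_univ_sum (fun _ : ι => (univ : Finset Bool)) g
  rw [Fintype.piFinset_univ] at h
  rw [← h]
  exact Finset.prod_congr rfl fun i _ => by simp

lemma sum_Wt : ∑ A : Equiv.Perm (Fin (n+1)) → Bool, Wt p A = 1 := by
  classical
  rw [show (fun A : Equiv.Perm (Fin (n+1)) → Bool => Wt p A) = fun A => ∏ ρ, wt p (A ρ) from rfl]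
  rw [sum_prod_bool (fun _ b => wt p b)]
  simp [wt]


lemma Wt_supermod (a b : Equiv.Perm (Fin (n+1)) → Bool) :
    Wt p a * Wt p b = Wt p (a ⊓ b) * Wt p (a ⊔ b) := by
  unfold Wt
  rw [← Finset.prod_mul_distrib, ← Finset.prod_mul_distrib]
  refine Finset.prod_congr rfl fun ρ _ => ?_
  cases h1 : a ρ <;> cases h2 : b ρ <;>
    simp [wt, Pi.inf_apply, Pi.sup_apply, h1, h2, mul_comm]

open Classical in
/-- indicator of the event that `π` is covered by some selected permutation -/
noncomputable def chi (π : Equiv.Perm (Fin n)) (A : Equiv.Perm (Fin (n+1)) → Bool) : ℝ :=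
  if ∃ ρ, A ρ = true ∧ Covers ρ π then 1 else 0

lemma chi_nonneg {π : Equiv.Perm (Fin n)} {A : Equiv.Perm (Fin (n+1)) → Bool} :
    0 ≤ chi π A := by
  unfold chi; split <;> norm_num

lemma chi_mono (π : Equiv.Perm (Fin n)) : Monotone (chi π) := by
  intro A B hAB
  unfold chi
  by_cases h : ∃ ρ, A ρ = true ∧ Covers ρ π
  · obtain ⟨ρ, hρ, hc⟩ := h
    have hB : B ρ = true := by
      have h2 := hAB ρ
      rw [hρ] at h2
      exact le_antisymm (Bool.le_true _) h2
    rw [if_pos ⟨ρ, hρ, hc⟩, if_pos ⟨ρ, hB, hc⟩]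
  · rw [if_neg h]
    split <;> norm_num

lemma prod_chi_mono (s : Finset (Equiv.Perm (Fin n))) :
    Monotone (fun A : Equiv.Perm (Fin (n+1)) → Bool => ∏ π ∈ s, chi π A) := by
  intro A B h
  exact Finset.prod_le_prod (fun π _ => chi_nonneg) (fun π _ => chi_mono π h)

set_option maxHeartbeats 800000 in
lemma sum_wt_chi (hn : 1 ≤ n) (hp0 : 0 ≤ p) (hp1 : p ≤ 1) (π : Equiv.Perm (Fin n)) :
    1 - (1 - p) ^ (n ^ 2 + 1) ≤ ∑ A, Wt p A * chi π A := by
  classical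
  have hT : n ^ 2 + 1 ≤ (univ.filter (fun ρ : Equiv.Perm (Fin (n+1)) => Covers ρ π)).card :=
    covers_card hn π
  have hcompl : ∑ A : Equiv.Perm (Fin (n+1)) → Bool, Wt p A * (1 - chi π A)
      = (1 - p) ^ (univ.filter (fun ρ : Equiv.Perm (Fin (n+1)) => Covers ρ π)).card := by
    have hpt : ∀ A : Equiv.Perm (Fin (n+1)) → Bool,
        Wt p A * (1 - chi π A)
          = ∏ ρ, (fun ρ b => if Covers ρ π ∧ b = true then 0 else wt p b) ρ (A ρ) := by
      intro A
      by_cases h : ∃ ρ, A ρ = true ∧ Covers ρ π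
      · obtain ⟨ρ0, h1, h2⟩ := h
        rw [show chi π A = 1 from by rw [chi, if_pos ⟨ρ0, h1, h2⟩]]
        rw [Finset.prod_eq_zero (Finset.mem_univ ρ0)
          (show (fun ρ b => if Covers ρ π ∧ b = true then 0 else wt p b) ρ0 (A ρ0) = 0 from by
            simp [h1, h2])]
        ring
      · rw [show chi π A = 0 from by rw [chi, if_neg h]]
        push_neg at h
        rw [sub_zero, mul_one]
        refine Finset.prod_congr rfl fun ρ _ => ?_
        show wt p (A ρ) = if Covers ρ π ∧ A ρ = true then 0 else wt p (A ρ)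
        rw [if_neg]
        rintro ⟨hc, ht⟩
        exact h ρ ht hc
    have h2 := sum_prod_bool (fun (ρ : Equiv.Perm (Fin (n+1))) (b : Bool) =>
      if Covers ρ π ∧ b = true then 0 else wt p b)
    have hstep : ∑ A : Equiv.Perm (Fin (n+1)) → Bool, Wt p A * (1 - chi π A)
        = ∑ A : Equiv.Perm (Fin (n+1)) → Bool,
            ∏ ρ, (fun ρ b => if Covers ρ π ∧ b = true then 0 else wt p b) ρ (A ρ) :=
      Finset.sum_congr rfl fun A _ => hpt A
    rw [hstep, h2]
    have h3 : ∀ ρ : Equiv.Perm (Fin (n+1)), ρ ∈ (univ : Finset (Equiv.Perm (Fin (n+1)))) →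
        ((fun (ρ : Equiv.Perm (Fin (n+1))) (b : Bool) =>
          if Covers ρ π ∧ b = true then 0 else wt p b) ρ true
          + (fun (ρ : Equiv.Perm (Fin (n+1))) (b : Bool) =>
          if Covers ρ π ∧ b = true then 0 else wt p b) ρ false)
        = if Covers ρ π then 1 - p else 1 := by
      intro ρ _
      by_cases h : Covers ρ π <;> simp [h, wt]
    rw [Finset.prod_congr rfl h3]
    rw [Finset.prod_ite, Finset.prod_const, Finset.prod_const, one_pow, mul_one]
  have hsum : ∑ A, Wt p A * chi π A
      = 1 - (1 - p) ^ (univ.filter (fun ρ : Equiv.Perm (Fin (n+1)) => Covers ρ π)).card := by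
    have h1 := sum_Wt (n := n) (p := p)
    have hexp : ∑ A : Equiv.Perm (Fin (n+1)) → Bool, Wt p A * chi π A
        = (∑ A : Equiv.Perm (Fin (n+1)) → Bool, Wt p A)
          - ∑ A : Equiv.Perm (Fin (n+1)) → Bool, Wt p A * (1 - chi π A) := by
      rw [← Finset.sum_sub_distrib]
      exact Finset.sum_congr rfl fun A _ => by ring
    rw [hexp, h1, hcompl]
  rw [hsum]
  have hle : (1 - p) ^ (univ.filter (fun ρ : Equiv.Perm (Fin (n+1)) => Covers ρ π)).card
      ≤ (1 - p) ^ (n ^ 2 + 1) :=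
    pow_le_pow_of_le_one (by linarith) (by linarith) hT
  linarith

lemma harris (hp0 : 0 ≤ p) (hp1 : p ≤ 1) (s : Finset (Equiv.Perm (Fin n))) :
    ∏ π ∈ s, (∑ A, Wt p A * chi π A) ≤ ∑ A, Wt p A * ∏ π ∈ s, chi π A := by
  classical
  induction s using Finset.induction_on with
  | empty => simp [sum_Wt]
  | @insert a s ha ih =>
    rw [Finset.prod_insert ha]
    have hnn : 0 ≤ ∑ A, Wt p A * chi a A :=
      Finset.sum_nonneg fun A _ => mul_nonneg (Wt_nonneg hp0 hp1 A) chi_nonneg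
    calc (∑ A, Wt p A * chi a A) * ∏ π ∈ s, (∑ A, Wt p A * chi π A)
        ≤ (∑ A, Wt p A * chi a A) * ∑ A, Wt p A * ∏ π ∈ s, chi π A :=
          mul_le_mul_of_nonneg_left ih hnn
      _ ≤ (∑ A, Wt p A) * ∑ A, Wt p A * (chi a A * ∏ π ∈ s, chi π A) := by
          apply fkg (f := chi a) (g := fun A => ∏ π ∈ s, chi π A)
          · intro A; exact Wt_nonneg hp0 hp1 A
          · intro A; exact chi_nonneg
          · intro A; exact Finset.prod_nonneg fun π _ => chi_nonneg
          · exact chi_mono a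
          · exact prod_chi_mono s
          · intro A B; exact le_of_eq (Wt_supermod A B)
      _ = ∑ A, Wt p A * ∏ π ∈ insert a s, chi π A := by
          rw [sum_Wt, one_mul]
          exact Finset.sum_congr rfl fun A _ => by rw [Finset.prod_insert ha]

instance bern_finite (p : ℝ) : IsFiniteMeasure (bern p) := by
  constructor
  simp only [bern, Measure.add_apply, Measure.smul_apply, smul_eq_mul]
  exact ENNReal.add_lt_top.2 ⟨ENNReal.mul_lt_top ENNReal.coe_lt_top (by simp),
    ENNReal.mul_lt_top ENNReal.coe_lt_top (by simp)⟩

lemma bern_apply (b : Bool) : bern p {b} = ENNReal.ofReal (wt p b) := by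
  cases b <;>
    simp [bern, wt, Measure.dirac_apply, Measure.smul_apply, ENNReal.ofReal,
      smul_eq_mul]

lemma coverMeasure_singleton (hp0 : 0 ≤ p) (hp1 : p ≤ 1)
    (A : Equiv.Perm (Fin (n+1)) → Bool) :
    coverMeasure n p {A} = ENNReal.ofReal (Wt p A) := by
  have hset : ({A} : Set (Equiv.Perm (Fin (n+1)) → Bool))
      = Set.pi Set.univ (fun ρ => {A ρ}) := by
    ext B
    simp [Set.mem_pi, funext_iff]
  rw [coverMeasure, hset, Measure.pi_pi]
  rw [show Wt p A = ∏ ρ, wt p (A ρ) from rfl]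
  rw [ENNReal.ofReal_prod_of_nonneg (fun ρ _ => wt_nonneg hp0 hp1 _)]
  exact Finset.prod_congr rfl fun ρ _ => bern_apply _

lemma coverMeasure_toReal (hp0 : 0 ≤ p) (hp1 : p ≤ 1)
    (S : Set (Equiv.Perm (Fin (n+1)) → Bool)) [DecidablePred (· ∈ S)] :
    (coverMeasure n p S).toReal = ∑ A ∈ univ.filter (· ∈ S), Wt p A := by
  classical
  have hS : S = ⋃ A ∈ (univ.filter (· ∈ S) : Finset _), ({A} : Set _) := by
    ext B; simp
  conv_lhs => rw [hS]
  rw [measure_biUnion_finset ?hd ?hm]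
  · rw [ENNReal.toReal_sum ?hfin]
    · exact Finset.sum_congr rfl fun A _ => by
        rw [coverMeasure_singleton hp0 hp1, ENNReal.toReal_ofReal (Wt_nonneg hp0 hp1 A)]
    · intro A _
      rw [coverMeasure_singleton hp0 hp1]
      exact ENNReal.ofReal_ne_top
  · intro A _ B _ hAB
    exact Set.disjoint_singleton.2 hAB
  · intro A _
    exact measurableSet_singleton A

end Prob


theorem coverage_prob_lower (n : ℕ) (hn : 1 ≤ n) (p : ℝ) (hp0 : 0 < p) (hp1 : p < 1) :
    (1 - (1 - p) ^ (n ^ 2 + 1)) ^ n.factorial ≤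
      (coverMeasure n p {A | numUncovered n A = 0}).toReal := by
  classical
  have hp0' : (0:ℝ) ≤ p := hp0.le
  have hp1' : p ≤ 1 := hp1.le
  have hset : {A : Equiv.Perm (Fin (n+1)) → Bool | numUncovered n A = 0}
      = {A : Equiv.Perm (Fin (n+1)) → Bool |
          ∀ π : Equiv.Perm (Fin n), ∃ ρ, A ρ = true ∧ Covers ρ π} := by
    ext A
    simp only [Set.mem_setOf_eq, numUncovered]
    rw [Set.ncard_eq_zero (Set.toFinite _), Set.eq_empty_iff_forall_notMem]
    simp
  rw [hset, coverMeasure_toReal hp0' hp1']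
  have hind : ∑ A ∈ univ.filter (· ∈ {A : Equiv.Perm (Fin (n+1)) → Bool |
        ∀ π : Equiv.Perm (Fin n), ∃ ρ, A ρ = true ∧ Covers ρ π}), Wt p A
      = ∑ A, Wt p A * ∏ π : Equiv.Perm (Fin n), chi π A := by
    rw [Finset.sum_filter]
    refine Finset.sum_congr rfl fun A _ => ?_
    simp only [Set.mem_setOf_eq]
    by_cases h : ∀ π : Equiv.Perm (Fin n), ∃ ρ, A ρ = true ∧ Covers ρ π
    · rw [if_pos h]
      have h1 : ∏ π : Equiv.Perm (Fin n), chi π A = 1 :=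
        Finset.prod_eq_one fun π _ => by rw [chi, if_pos (h π)]
      rw [h1, mul_one]
    · rw [if_neg h]
      push_neg at h
      obtain ⟨π0, hπ0⟩ := h
      rw [Finset.prod_eq_zero (Finset.mem_univ π0)
        (by rw [chi, if_neg (by push_neg; exact hπ0)]), mul_zero]
  rw [hind]
  calc (1 - (1 - p) ^ (n ^ 2 + 1)) ^ n.factorial
      = ∏ _π : Equiv.Perm (Fin n), (1 - (1 - p) ^ (n ^ 2 + 1)) := by
        rw [Finset.prod_const, Finset.card_univ, Fintype.card_perm, Fintype.card_fin]
    _ ≤ ∏ π : Equiv.Perm (Fin n), (∑ A, Wt p A * chi π A) := by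
        apply Finset.prod_le_prod
        · intro π _
          have h1 : (1 - p) ^ (n ^ 2 + 1) ≤ 1 := pow_le_one₀ (by linarith) (by linarith)
          linarith
        · intro π _
          exact sum_wt_chi hn hp0' hp1' π
    _ ≤ ∑ A, Wt p A * ∏ π : Equiv.Perm (Fin n), chi π A := harris hp0' hp1' univ
end
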